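/- arXiv:0803.0358 — 5 statements merged into one kernel-verified Lean document; each statement's English description precedes it below -/
import Mathlib

section
/- Let (X, μ) be a finite measure space, (ε_h) a sequence of positive real numbers with ε_h → 0, and let R_h : X → ℝ^{3×3} be measurable maps with R_h(x) ∈ SO(3) for μ-almost every x ∈ X. Suppose there is A ∈ L²(μ; ℝ^{3×3}) such that ε_h^{-1}(R_h − Id) converges to A in L²(μ), i.e. ∫_X ‖ε_h^{-1}(R_h(x) − Id) − A(x)‖² dμ(x) → 0. Then: (i) A(x) is skew-symmetric (A(x)^T = −A(x)) for μ-almost every x; (ii) ε_h^{-2} sym(R_h − Id) converges to (1/2)A² in L¹(μ), i.e. ∫_X ‖ε_h^{-2} sym(R_h(x) − Id) − (1/2)A(x)²‖ dμ(x) → 0. -/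
/-! For `R ∈ SO(3)`, `sym (R - 1) = -½ (R - 1)ᵀ (R - 1)`; with `B_h = ε_h⁻¹ (R_h - 1)` this gives
`ε_h⁻² sym (R_h - 1) = -½ B_hᵀ B_h` and `sym B_h = -(ε_h / 2) B_hᵀ B_h`. The latter is `O(ε_h)` in
`L¹` because `B_h` is bounded in `L²`, while `sym B_h → sym A`; so `A` is skew and `Aᵀ A = -A²`.
By Cauchy–Schwarz, `B_h → A` in `L²` forces `B_hᵀ B_h → Aᵀ A` in `L¹`, which is the second claim. -/

open MeasureTheory Filter Topology Matrix
open scoped ENNReal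

attribute [local instance] Matrix.frobeniusNormedAddCommGroup Matrix.frobeniusNormedSpace

local instance : MeasurableSpace (Matrix (Fin 3) (Fin 3) ℝ) :=
  inferInstanceAs (MeasurableSpace (Fin 3 → Fin 3 → ℝ))

local instance : BorelSpace (Matrix (Fin 3) (Fin 3) ℝ) :=
  inferInstanceAs (BorelSpace (Fin 3 → Fin 3 → ℝ))

local instance : SecondCountableTopology (Matrix (Fin 3) (Fin 3) ℝ) :=
  inferInstanceAs (SecondCountableTopology (Fin 3 → Fin 3 → ℝ))

noncomputable def matSym (M : Matrix (Fin 3) (Fin 3) ℝ) : Matrix (Fin 3) (Fin 3) ℝ :=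
  (1 / 2 : ℝ) • (M + Mᵀ)

section Frobenius

variable {n : Type*} [Fintype n]

theorem norm_eq_sqrt_card_of_transpose_mul_self_eq_one [DecidableEq n] {R : Matrix n n ℝ}
    (hR : Rᵀ * R = 1) : ‖R‖ = √(Fintype.card n) := by
  have hcol : ∀ j, ∑ i, R i j ^ 2 = 1 := fun j => by
    simpa [Matrix.mul_apply, sq] using congr_fun (congr_fun hR j) j
  rw [frobenius_norm_def, Finset.sum_comm]
  simp [Real.norm_eq_abs, sq_abs, hcol, Real.sqrt_eq_rpow]

theorem norm_transpose_mul_self_sub_le (A B : Matrix n n ℝ) :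
    ‖Bᵀ * B - Aᵀ * A‖ ≤ ‖B - A‖ ^ 2 + 2 * (‖A‖ * ‖B - A‖) := by
  have h : Bᵀ * B - Aᵀ * A = (B - A)ᵀ * (B - A) + (B - A)ᵀ * A + Aᵀ * (B - A) := by
    simp only [transpose_sub, sub_mul, mul_sub]; abel
  calc ‖Bᵀ * B - Aᵀ * A‖
      ≤ ‖(B - A)ᵀ * (B - A)‖ + ‖(B - A)ᵀ * A‖ + ‖Aᵀ * (B - A)‖ := h ▸ norm_add₃_le
    _ ≤ ‖B - A‖ * ‖B - A‖ + ‖B - A‖ * ‖A‖ + ‖A‖ * ‖B - A‖ := by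
        gcongr <;> exact (frobenius_norm_mul _ _).trans_eq (by rw [frobenius_norm_transpose])
    _ = _ := by ring

end Frobenius

theorem matSym_smul (c : ℝ) (M : Matrix (Fin 3) (Fin 3) ℝ) :
    matSym (c • M) = c • matSym M := by
  simp only [matSym, transpose_smul, ← smul_add, smul_comm c]

theorem matSym_sub (M N : Matrix (Fin 3) (Fin 3) ℝ) :
    matSym (M - N) = matSym M - matSym N := by
  simp only [matSym, transpose_sub]; module

theorem norm_matSym_le (M : Matrix (Fin 3) (Fin 3) ℝ) : ‖matSym M‖ ≤ ‖M‖ := by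
  have h := norm_add_le M Mᵀ
  rw [frobenius_norm_transpose] at h
  rw [matSym, norm_smul]
  norm_num
  linarith

theorem continuous_matSym : Continuous matSym :=
  (continuous_id.add continuous_id.matrix_transpose).const_smul (1 / 2 : ℝ)

theorem transpose_eq_neg_of_matSym_eq_zero {M : Matrix (Fin 3) (Fin 3) ℝ} (h : matSym M = 0) :
    Mᵀ = -M := by
  rw [matSym, smul_eq_zero] at h
  exact eq_neg_of_add_eq_zero_right (h.resolve_left (by norm_num))

theorem norm_matSym_le_of_norm_matSym_le_mul_sq {A B : Matrix (Fin 3) (Fin 3) ℝ} {c : ℝ} (hc : 0 ≤ c)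
    (hB : ‖matSym B‖ ≤ c * ‖B‖ ^ 2) :
    ‖matSym A‖ ≤ ‖B - A‖ + c * (2 * ‖B - A‖ ^ 2 + 2 * ‖A‖ ^ 2) := by
  have hsplit : matSym A = matSym B - matSym (B - A) := by rw [matSym_sub]; abel
  have hB2 : ‖B‖ ^ 2 ≤ 2 * ‖B - A‖ ^ 2 + 2 * ‖A‖ ^ 2 := by
    have h := norm_add_le (B - A) A
    rw [sub_add_cancel] at h
    nlinarith [sq_nonneg (‖B - A‖ - ‖A‖), norm_nonneg B]
  calc ‖matSym A‖ ≤ ‖matSym B‖ + ‖matSym (B - A)‖ := hsplit ▸ norm_sub_le _ _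
    _ ≤ c * ‖B‖ ^ 2 + ‖B - A‖ := add_le_add hB (norm_matSym_le _)
    _ ≤ _ := by nlinarith

theorem matSym_sub_one_of_transpose_mul_self_eq_one {R : Matrix (Fin 3) (Fin 3) ℝ}
    (hR : Rᵀ * R = 1) : matSym (R - 1) = -(1 / 2 : ℝ) • ((R - 1)ᵀ * (R - 1)) := by
  rw [matSym]
  simp only [transpose_sub, transpose_one, sub_mul, mul_sub, hR, one_mul, mul_one]
  module

theorem inv_sq_smul_matSym_sub_one {R : Matrix (Fin 3) (Fin 3) ℝ} (hR : Rᵀ * R = 1) (c : ℝ) :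
    (c ^ 2)⁻¹ • matSym (R - 1) = -(1 / 2 : ℝ) • ((c⁻¹ • (R - 1))ᵀ * (c⁻¹ • (R - 1))) := by
  rw [matSym_sub_one_of_transpose_mul_self_eq_one hR, transpose_smul, smul_mul_smul_comm,
    smul_comm, ← mul_inv, ← sq]

theorem norm_inv_sq_smul_matSym_sub_one_sub {R A : Matrix (Fin 3) (Fin 3) ℝ} (hR : Rᵀ * R = 1)
    (hA : Aᵀ = -A) (c : ℝ) :
    ‖(c ^ 2)⁻¹ • matSym (R - 1) - (1 / 2 : ℝ) • (A * A)‖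
      = 1 / 2 * ‖(c⁻¹ • (R - 1))ᵀ * (c⁻¹ • (R - 1)) - Aᵀ * A‖ := by
  have h2 : ‖(1 / 2 : ℝ)‖ = 1 / 2 := by norm_num
  have h : (c ^ 2)⁻¹ • matSym (R - 1) - (1 / 2 : ℝ) • (A * A)
      = -((1 / 2 : ℝ) • ((c⁻¹ • (R - 1))ᵀ * (c⁻¹ • (R - 1)) - Aᵀ * A)) := by
    rw [inv_sq_smul_matSym_sub_one hR, hA, neg_mul]
    module
  rw [h, norm_neg, norm_smul, h2]

theorem norm_matSym_inv_smul_sub_one_le {R : Matrix (Fin 3) (Fin 3) ℝ} (hR : Rᵀ * R = 1)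
    (c : ℝ) : ‖matSym (c⁻¹ • (R - 1))‖ ≤ |c| * ‖c⁻¹ • (R - 1)‖ ^ 2 := by
  rcases eq_or_ne c 0 with rfl | hc
  · simp [matSym]
  set B := c⁻¹ • (R - 1)
  have h : matSym B = c • ((c ^ 2)⁻¹ • matSym (R - 1)) := by
    rw [matSym_smul, smul_smul, sq, mul_inv, ← mul_assoc, mul_inv_cancel₀ hc, one_mul]
  calc ‖matSym B‖ = |c| * (1 / 2 * ‖Bᵀ * B‖) := by
        have h2 : ‖-(1 / 2 : ℝ)‖ = 1 / 2 := by norm_num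
        rw [h, inv_sq_smul_matSym_sub_one hR, norm_smul, norm_smul, h2, Real.norm_eq_abs]
    _ ≤ |c| * (1 / 2 * (‖B‖ * ‖B‖)) := by
        gcongr; exact (frobenius_norm_mul _ _).trans_eq (by rw [frobenius_norm_transpose])
    _ ≤ |c| * ‖B‖ ^ 2 := by gcongr; nlinarith [norm_nonneg B]

section Integral

variable {X : Type*} [MeasurableSpace X] {μ : Measure X}

theorem integral_mul_le_sqrt_mul_sqrt {u v : X → ℝ} (hu : 0 ≤ᵐ[μ] u) (hv : 0 ≤ᵐ[μ] v)
    (hu2 : MemLp u 2 μ) (hv2 : MemLp v 2 μ) :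
    ∫ x, u x * v x ∂μ ≤ √(∫ x, u x ^ 2 ∂μ) * √(∫ x, v x ^ 2 ∂μ) := by
  have h2 : ENNReal.ofReal 2 = 2 := by norm_num
  simpa only [Real.rpow_two, ← Real.sqrt_eq_rpow] using
    integral_mul_le_Lp_mul_Lq_of_nonneg Real.HolderConjugate.two_two hu hv (h2 ▸ hu2) (h2 ▸ hv2)

theorem tendsto_integral_mul_of_tendsto_integral_sq {ι : Type*} {l : Filter ι}
    {f : ι → X → ℝ} {g : X → ℝ} (hf0 : ∀ i, 0 ≤ᵐ[μ] f i) (hg0 : 0 ≤ᵐ[μ] g)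
    (hf : ∀ i, MemLp (f i) 2 μ) (hg : MemLp g 2 μ)
    (hlim : Tendsto (fun i => ∫ x, f i x ^ 2 ∂μ) l (𝓝 0)) :
    Tendsto (fun i => ∫ x, g x * f i x ∂μ) l (𝓝 0) := by
  have hsqrt : Tendsto (fun i => √(∫ x, g x ^ 2 ∂μ) * √(∫ x, f i x ^ 2 ∂μ)) l (𝓝 0) := by
    simpa using tendsto_const_nhds.mul ((Real.continuous_sqrt.tendsto 0).comp hlim)
  refine squeeze_zero (fun i => integral_nonneg_of_ae ?_)
    (fun i => integral_mul_le_sqrt_mul_sqrt hg0 (hf0 i) hg (hf i)) hsqrt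
  filter_upwards [hg0, hf0 i] with x hgx hfx using mul_nonneg hgx hfx

theorem memLp_of_ae_transpose_mul_self_eq_one [IsFiniteMeasure μ] {n : Type*} [Fintype n]
    [DecidableEq n] {R : X → Matrix n n ℝ} (hR : AEStronglyMeasurable R μ)
    (hRO : ∀ᵐ x ∂μ, (R x)ᵀ * R x = 1) (p : ℝ≥0∞) : MemLp R p μ :=
  MemLp.of_bound hR _ (hRO.mono fun _ hx => (norm_eq_sqrt_card_of_transpose_mul_self_eq_one hx).le)

theorem tendsto_integral_norm_transpose_mul_self_sub {n : Type*} [Fintype n] {ι : Type*}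
    {l : Filter ι} {B : ι → X → Matrix n n ℝ} {A : X → Matrix n n ℝ}
    (hB : ∀ i, MemLp (B i) 2 μ) (hA : MemLp A 2 μ)
    (hBA : Tendsto (fun i => ∫ x, ‖B i x - A x‖ ^ 2 ∂μ) l (𝓝 0)) :
    Tendsto (fun i => ∫ x, ‖(B i x)ᵀ * B i x - (A x)ᵀ * A x‖ ∂μ) l (𝓝 0) := by
  have hD : ∀ i, MemLp (fun x => ‖B i x - A x‖) 2 μ := fun i => ((hB i).sub hA).norm
  have hbound : ∀ i, ∫ x, ‖(B i x)ᵀ * B i x - (A x)ᵀ * A x‖ ∂μ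
      ≤ ∫ x, ‖B i x - A x‖ ^ 2 ∂μ + 2 * ∫ x, ‖A x‖ * ‖B i x - A x‖ ∂μ := by
    intro i
    have hsq := (hD i).integrable_sq
    have hmul : Integrable (fun x => ‖A x‖ * ‖B i x - A x‖) μ := hA.norm.integrable_mul (hD i)
    rw [← integral_const_mul, ← integral_add hsq (hmul.const_mul 2)]
    exact integral_mono_of_nonneg (ae_of_all _ fun x => norm_nonneg _)
      (hsq.add (hmul.const_mul 2)) (ae_of_all _ fun x => norm_transpose_mul_self_sub_le _ _)
  have hlim := hBA.add ((tendsto_integral_mul_of_tendsto_integral_sq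
    (fun i => ae_of_all _ fun x => norm_nonneg _) (ae_of_all _ fun x => norm_nonneg _)
    hD hA.norm hBA).const_mul 2)
  rw [mul_zero, add_zero] at hlim
  exact squeeze_zero (fun i => integral_nonneg fun x => norm_nonneg _) hbound hlim

theorem ae_matSym_eq_zero_of_tendsto [IsFiniteMeasure μ] {ι : Type*} {l : Filter ι} [l.NeBot]
    {ε : ι → ℝ} (hε : Tendsto ε l (𝓝 0)) {B : ι → X → Matrix (Fin 3) (Fin 3) ℝ}
    {A : X → Matrix (Fin 3) (Fin 3) ℝ} (hB : ∀ i, MemLp (B i) 2 μ) (hA : MemLp A 2 μ)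
    (hBA : Tendsto (fun i => ∫ x, ‖B i x - A x‖ ^ 2 ∂μ) l (𝓝 0))
    (hsymB : ∀ i, ∀ᵐ x ∂μ, ‖matSym (B i x)‖ ≤ |ε i| * ‖B i x‖ ^ 2) :
    ∀ᵐ x ∂μ, matSym (A x) = 0 := by
  have hD : ∀ i, MemLp (fun x => ‖B i x - A x‖) 2 μ := fun i => ((hB i).sub hA).norm
  have hpt : ∀ i, ∀ᵐ x ∂μ, ‖matSym (A x)‖
      ≤ ‖B i x - A x‖ + |ε i| * (2 * ‖B i x - A x‖ ^ 2 + 2 * ‖A x‖ ^ 2) := fun i =>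
    (hsymB i).mono fun _ hx => norm_matSym_le_of_norm_matSym_le_mul_sq (abs_nonneg _) hx
  have hbound : ∀ i, ∫ x, ‖matSym (A x)‖ ∂μ ≤ ∫ x, ‖B i x - A x‖ ∂μ
      + |ε i| * (2 * ∫ x, ‖B i x - A x‖ ^ 2 ∂μ + 2 * ∫ x, ‖A x‖ ^ 2 ∂μ) := by
    intro i
    have hD1 := (hD i).integrable one_le_two
    have hD2 := (hD i).integrable_sq.const_mul 2
    have hA2 := hA.norm.integrable_sq.const_mul 2
    have hrest : Integrable (fun x => |ε i| * (2 * ‖B i x - A x‖ ^ 2 + 2 * ‖A x‖ ^ 2)) μ :=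
      (hD2.add hA2).const_mul _
    calc ∫ x, ‖matSym (A x)‖ ∂μ
        ≤ ∫ x, ‖B i x - A x‖ + |ε i| * (2 * ‖B i x - A x‖ ^ 2 + 2 * ‖A x‖ ^ 2) ∂μ :=
          integral_mono_of_nonneg (ae_of_all _ fun x => norm_nonneg _) (hD1.add hrest) (hpt i)
      _ = _ := by
          rw [integral_add hD1 hrest, integral_const_mul,
            integral_add hD2 hA2, integral_const_mul, integral_const_mul]
  have hD1 : Tendsto (fun i => ∫ x, ‖B i x - A x‖ ∂μ) l (𝓝 0) := by
    simpa only [one_mul] using tendsto_integral_mul_of_tendsto_integral_sq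
      (fun i => ae_of_all _ fun x => norm_nonneg _) (ae_of_all _ fun x => zero_le_one)
      hD (memLp_const 1) hBA
  have hlim := hD1.add (hε.abs.mul ((hBA.const_mul 2).add_const (2 * ∫ x, ‖A x‖ ^ 2 ∂μ)))
  rw [abs_zero, zero_mul, add_zero] at hlim
  have hzero : ∫ x, ‖matSym (A x)‖ ∂μ = 0 :=
    le_antisymm (ge_of_tendsto' hlim hbound) (integral_nonneg fun _ => norm_nonneg _)
  have hint : Integrable (fun x => ‖matSym (A x)‖) μ :=
    (hA.norm.integrable one_le_two).mono' (continuous_matSym.comp_aestronglyMeasurable hA.1).norm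
      (ae_of_all _ fun x => (norm_norm _).trans_le (norm_matSym_le (A x)))
  filter_upwards [(integral_eq_zero_iff_of_nonneg (fun _ => norm_nonneg _) hint).mp hzero]
    with x hx using norm_eq_zero.mp hx

end Integral

theorem stmt0_general {X : Type*} [MeasurableSpace X] (μ : Measure X) [IsFiniteMeasure μ]
    (ε : ℕ → ℝ) (hε0 : Tendsto ε atTop (𝓝 0))
    (R : ℕ → X → Matrix (Fin 3) (Fin 3) ℝ) (hRmeas : ∀ h, Measurable (R h))
    (hRSO : ∀ h, ∀ᵐ x ∂μ, (R h x)ᵀ * R h x = 1 ∧ (R h x).det = 1)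
    (A : X → Matrix (Fin 3) (Fin 3) ℝ) (hA : MemLp A 2 μ)
    (hconv :
      Tendsto (fun h => ∫ x, ‖(ε h)⁻¹ • (R h x - 1) - A x‖ ^ 2 ∂μ) atTop (𝓝 0)) :
    (∀ᵐ x ∂μ, (A x)ᵀ = -A x) ∧
      Tendsto (fun h => ∫ x, ‖(ε h ^ 2)⁻¹ • matSym (R h x - 1)
        - (1 / 2 : ℝ) • (A x * A x)‖ ∂μ) atTop (𝓝 0) := by
  set B : ℕ → X → Matrix (Fin 3) (Fin 3) ℝ := fun h x => (ε h)⁻¹ • (R h x - 1)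
  have hB : ∀ h, MemLp (B h) 2 μ := fun h =>
    ((memLp_of_ae_transpose_mul_self_eq_one (hRmeas h).aestronglyMeasurable
      ((hRSO h).mono fun _ hx => hx.1) 2).sub (memLp_const 1)).const_smul (ε h)⁻¹
  have hskew : ∀ᵐ x ∂μ, (A x)ᵀ = -A x := by
    refine (ae_matSym_eq_zero_of_tendsto hε0 hB hA hconv fun h => ?_).mono
      fun x hx => transpose_eq_neg_of_matSym_eq_zero hx
    filter_upwards [hRSO h] with x hx using norm_matSym_inv_smul_sub_one_le hx.1 (ε h)
  refine ⟨hskew, ?_⟩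
  have hpt : ∀ h, ∀ᵐ x ∂μ, ‖(ε h ^ 2)⁻¹ • matSym (R h x - 1) - (1 / 2 : ℝ) • (A x * A x)‖
      = 1 / 2 * ‖(B h x)ᵀ * B h x - (A x)ᵀ * A x‖ := fun h => by
    filter_upwards [hRSO h, hskew] with x hx hAx
      using norm_inv_sq_smul_matSym_sub_one_sub hx.1 hAx (ε h)
  have hL1 := (tendsto_integral_norm_transpose_mul_self_sub hB hA hconv).const_mul (1 / 2)
  rw [mul_zero] at hL1
  exact hL1.congr fun h => by rw [integral_congr_ae (hpt h), integral_const_mul]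

/-- Measure-theoretic core of Lemma 3.2 (ii), (iii): if `R_h` are `SO(3)`-valued matrix
fields with `ε_h⁻¹ (R_h − Id) → A` in `L²(μ)`, then `A` is a.e. skew-symmetric and
`ε_h⁻² sym(R_h − Id) → (1/2) A²` in `L¹(μ)`. -/
theorem stmt0 {X : Type*} [MeasurableSpace X] (μ : Measure X) [IsFiniteMeasure μ]
    (ε : ℕ → ℝ) (hεpos : ∀ h, 0 < ε h) (hε0 : Tendsto ε atTop (𝓝 0))
    (R : ℕ → X → Matrix (Fin 3) (Fin 3) ℝ) (hRmeas : ∀ h, Measurable (R h))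
    (hRSO : ∀ h, ∀ᵐ x ∂μ, (R h x)ᵀ * R h x = 1 ∧ (R h x).det = 1)
    (A : X → Matrix (Fin 3) (Fin 3) ℝ) (hA : MemLp A 2 μ)
    (hconv :
      Tendsto (fun h => ∫ x, ‖(ε h)⁻¹ • (R h x - 1) - A x‖ ^ 2 ∂μ) atTop (𝓝 0)) :
    (∀ᵐ x ∂μ, (A x)ᵀ = -A x) ∧
      Tendsto (fun h => ∫ x, ‖(ε h ^ 2)⁻¹ • matSym (R h x - 1)
        - (1 / 2 : ℝ) • (A x * A x)‖ ∂μ) atTop (𝓝 0) :=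
  stmt0_general μ ε hε0 R hRmeas hRSO A hA hconv
end

section
/- Let Ω ⊆ ℝ² be open and connected, let r : Ω → ℝ³ be twice continuously differentiable with ∂₁r(x) × ∂₂r(x) ≠ 0 for every x ∈ Ω, let c : Ω → ℝ³ be continuously differentiable, and let V : Ω → ℝ³ be differentiable with ∂ᵢV(x) = c(x) × ∂ᵢr(x) for i = 1, 2 and every x ∈ Ω. Assume the linearized bending vanishes: ∂ᵢc(x) × (∂₁r(x) × ∂₂r(x)) = 0 for i = 1, 2 and every x ∈ Ω. Then c is constant on Ω, and there exist vectors c₀, d ∈ ℝ³ such that V(x) = c₀ × r(x) + d for all x ∈ Ω. -/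
/-! Symmetry of the second derivatives of `V` and `r` turns `∂ᵢV = c × ∂ᵢr` into
`∂₁c × ∂₂r = ∂₂c × ∂₁r`. Dotting this with `∂₁r` and `∂₂r` shows that both `∂ᵢc` are orthogonal
to the normal `n = ∂₁r × ∂₂r`, while the vanishing bending `∂ᵢc × n = 0` makes them parallel
to `n`. Hence `∇c = 0`, so `c ≡ c₀` on the connected set `Ω`, and then `V - c₀ × r` has zero
derivative, hence is constant. -/

open Set Filter Topology
open scoped Matrix

theorem ContinuousLinearMap.ext_pi_single {R ι F : Type*} [Semiring R] [TopologicalSpace R]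
    [Finite ι] [DecidableEq ι] [TopologicalSpace F] [AddCommMonoid F] [Module R F]
    {L M : (ι → R) →L[R] F} (h : ∀ i, L (Pi.single i 1) = M (Pi.single i 1)) : L = M :=
  coe_injective <| (Pi.basisFun R ι).ext fun i ↦ by simpa using h i

section CrossProduct

variable {R : Type*} [Field R] [LinearOrder R] [IsStrictOrderedRing R]

theorem eq_zero_of_cross_eq_zero_of_dotProduct_eq_zero {a n : Fin 3 → R} (hn : n ≠ 0)
    (hcross : a ⨯₃ n = 0) (hdot : a ⬝ᵥ n = 0) : a = 0 := by
  have h : (n ⬝ᵥ n) • a = 0 := by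
    simpa [hcross, hdot] using (cross_cross_eq_smul_sub_smul' n a n).symm
  exact (smul_eq_zero.mp h).resolve_left (mt dotProduct_self_eq_zero.mp hn)

theorem eq_zero_of_cross_eq_cross_of_cross_cross_eq_zero {a₀ a₁ b₀ b₁ : Fin 3 → R}
    (hb : b₀ ⨯₃ b₁ ≠ 0) (hab : a₀ ⨯₃ b₁ = a₁ ⨯₃ b₀)
    (ha₀ : a₀ ⨯₃ (b₀ ⨯₃ b₁) = 0) (ha₁ : a₁ ⨯₃ (b₀ ⨯₃ b₁) = 0) : a₀ = 0 ∧ a₁ = 0 := by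
  have hdot₀ : a₀ ⬝ᵥ b₀ ⨯₃ b₁ = 0 := by
    have := congrArg (b₀ ⬝ᵥ ·) hab
    simp only [dot_cross_self, triple_product_permutation b₀ a₀ b₁] at this
    rw [← cross_anticomm, dotProduct_neg, this, neg_zero]
  have hdot₁ : a₁ ⬝ᵥ b₀ ⨯₃ b₁ = 0 := by
    have := congrArg (b₁ ⬝ᵥ ·) hab
    simp only [dot_cross_self, triple_product_permutation b₁ a₁ b₀] at this
    exact this.symm
  exact ⟨eq_zero_of_cross_eq_zero_of_dotProduct_eq_zero hb ha₀ hdot₀,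
    eq_zero_of_cross_eq_zero_of_dotProduct_eq_zero hb ha₁ hdot₁⟩

end CrossProduct

noncomputable def crossProductL : (Fin 3 → ℝ) →L[ℝ] (Fin 3 → ℝ) →L[ℝ] Fin 3 → ℝ :=
  LinearMap.toContinuousLinearMap
    (LinearMap.toContinuousLinearMap.toLinearMap ∘ₗ (crossProduct : (Fin 3 → ℝ) →ₗ[ℝ] _))

@[simp] theorem crossProductL_apply (a b : Fin 3 → ℝ) : crossProductL a b = a ⨯₃ b := rfl

section Calculus

variable {E : Type*} [NormedAddCommGroup E] [NormedSpace ℝ E]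

theorem fderiv_cross_fderiv_symm {V r c : E → Fin 3 → ℝ} {x : E}
    (hV : ∀ᶠ y in 𝓝 x, HasFDerivAt V ((crossProductL (c y)).comp (fderiv ℝ r y)) y)
    (hr : ContDiffAt ℝ 2 r x) (hc : DifferentiableAt ℝ c x) (v w : E) :
    fderiv ℝ c x v ⨯₃ fderiv ℝ r x w = fderiv ℝ c x w ⨯₃ fderiv ℝ r x v := by
  have hr' : DifferentiableAt ℝ (fderiv ℝ r) x :=
    (hr.fderiv_right (m := 1) (by norm_num)).differentiableAt one_ne_zero
  have hsymm := second_derivative_symmetric_of_eventually hV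
    ((crossProductL.hasFDerivAt.comp x hc.hasFDerivAt).clm_comp hr'.hasFDerivAt) v w
  simp only [add_apply, ContinuousLinearMap.comp_apply,
    ContinuousLinearMap.compL_apply, ContinuousLinearMap.flip_apply, crossProductL_apply,
    hr.isSymmSndFDerivAt (by simp) v w] at hsymm
  exact add_left_cancel hsymm

theorem HasFDerivAt.const_crossProduct {r : E → Fin 3 → ℝ} {r' : E →L[ℝ] Fin 3 → ℝ} {x : E}
    (hr : HasFDerivAt r r' x) (c₀ : Fin 3 → ℝ) :
    HasFDerivAt (fun y ↦ c₀ ⨯₃ r y) ((crossProductL c₀).comp r') x :=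
  (crossProductL c₀).hasFDerivAt.comp x hr

end Calculus

theorem fderiv_eq_zero_of_cross_normal_eq_zero {V r c : (Fin 2 → ℝ) → Fin 3 → ℝ}
    {x : Fin 2 → ℝ}
    (hV : ∀ᶠ y in 𝓝 x, HasFDerivAt V ((crossProductL (c y)).comp (fderiv ℝ r y)) y)
    (hr : ContDiffAt ℝ 2 r x) (hc : DifferentiableAt ℝ c x)
    (hreg : fderiv ℝ r x (Pi.single 0 1) ⨯₃ fderiv ℝ r x (Pi.single 1 1) ≠ 0)
    (hbend : ∀ i : Fin 2, fderiv ℝ c x (Pi.single i 1) ⨯₃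
      (fderiv ℝ r x (Pi.single 0 1) ⨯₃ fderiv ℝ r x (Pi.single 1 1)) = 0) :
    fderiv ℝ c x = 0 := by
  obtain ⟨h₀, h₁⟩ := eq_zero_of_cross_eq_cross_of_cross_cross_eq_zero hreg
    (fderiv_cross_fderiv_symm hV hr hc _ _) (hbend 0) (hbend 1)
  exact ContinuousLinearMap.ext_pi_single <| Fin.forall_fin_two.mpr ⟨h₀, h₁⟩

/-- Infinitesimal isometries with vanishing linearized bending are linearized rigid motions
(Step 1 of the coercivity Lemma, Appendix C): if `r` parametrizes a surface over an open
connected `Ω ⊆ ℝ²`, `∂ᵢV = c × ∂ᵢr` and `∂ᵢc × (∂₁r × ∂₂r) = 0` on `Ω`, then `c` is constant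
and `V(x) = c₀ × r(x) + d`. -/
theorem stmt6 (Ω : Set (Fin 2 → ℝ)) (hΩo : IsOpen Ω) (hΩc : IsConnected Ω)
    (r : (Fin 2 → ℝ) → (Fin 3 → ℝ)) (hr : ContDiffOn ℝ 2 r Ω)
    (hreg : ∀ x ∈ Ω,
      crossProduct (fderiv ℝ r x (Pi.single 0 1)) (fderiv ℝ r x (Pi.single 1 1)) ≠ 0)
    (c : (Fin 2 → ℝ) → (Fin 3 → ℝ)) (hc : ContDiffOn ℝ 1 c Ω)
    (V : (Fin 2 → ℝ) → (Fin 3 → ℝ)) (hV : DifferentiableOn ℝ V Ω)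
    (hVc : ∀ x ∈ Ω, ∀ i : Fin 2,
      fderiv ℝ V x (Pi.single i 1) = crossProduct (c x) (fderiv ℝ r x (Pi.single i 1)))
    (hbend : ∀ x ∈ Ω, ∀ i : Fin 2,
      crossProduct (fderiv ℝ c x (Pi.single i 1))
        (crossProduct (fderiv ℝ r x (Pi.single 0 1)) (fderiv ℝ r x (Pi.single 1 1))) = 0) :
    ∃ c₀ d : Fin 3 → ℝ, (∀ x ∈ Ω, c x = c₀) ∧
      ∀ x ∈ Ω, V x = crossProduct c₀ (r x) + d := by
  have hrd := hr.differentiableOn two_ne_zero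
  have hcd := hc.differentiableOn one_ne_zero
  have hV' : ∀ y ∈ Ω, HasFDerivAt V ((crossProductL (c y)).comp (fderiv ℝ r y)) y := by
    intro y hy
    have hfd : fderiv ℝ V y = (crossProductL (c y)).comp (fderiv ℝ r y) :=
      ContinuousLinearMap.ext_pi_single (hVc y hy)
    exact hfd ▸ (hV.differentiableAt (hΩo.mem_nhds hy)).hasFDerivAt
  have hc' : EqOn (fderiv ℝ c) 0 Ω := fun x hx ↦
    fderiv_eq_zero_of_cross_normal_eq_zero (eventually_of_mem (hΩo.mem_nhds hx) hV')
      (hr.contDiffAt (hΩo.mem_nhds hx)) (hcd.differentiableAt (hΩo.mem_nhds hx)) (hreg x hx)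
      (hbend x hx)
  obtain ⟨c₀, hc₀⟩ := hΩo.exists_is_const_of_fderiv_eq_zero hΩc.isPreconnected hcd hc'
  have hrot : ∀ y ∈ Ω,
      HasFDerivAt (fun y ↦ c₀ ⨯₃ r y) ((crossProductL c₀).comp (fderiv ℝ r y)) y :=
    fun y hy ↦ (hrd.differentiableAt (hΩo.mem_nhds hy)).hasFDerivAt.const_crossProduct c₀
  obtain ⟨d, hd⟩ := hΩo.exists_eq_add_of_fderiv_eq hΩc.isPreconnected hV
    (fun y hy ↦ (hrot y hy).differentiableAt.differentiableWithinAt)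
    fun y hy ↦ by rw [(hV' y hy).fderiv, (hrot y hy).fderiv, hc₀ y hy]
  exact ⟨c₀, d, hc₀, fun x hx ↦ hd hx⟩
end

section
/- Let s₀ < s₁ be real numbers, let g : [s₀, s₁] → ℝ be twice continuously differentiable with g(s) > 0 for all s, and let N ∈ ℕ. Let ψ : [s₀, s₁] × ℝ → ℝ be of the form ψ(s, θ) = p₀(s) + Σ_{k=1}^{N} ( p_k(s) cos(kθ) + q_k(s) sin(kθ) ) with continuous p_k, q_k : [s₀, s₁] → ℝ. Then there exist twice continuously differentiable functions b_k, c_k : [s₀, s₁] → ℝ (0 ≤ k ≤ N) such that the function b(s, θ) = b₀(s) + Σ_{k=1}^{N} ( b_k(s) cos(kθ) + c_k(s) sin(kθ) ) satisfies g(s) ∂²_s b(s, θ) − g''(s) ( b(s, θ) + ∂²_θ b(s, θ) ) = ψ(s, θ) for all (s, θ) ∈ [s₀, s₁] × ℝ. -/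
/-!
Since `∂²_θ` multiplies the `k`-th Fourier mode by `-k²`, the equation decouples into the ODEs
`g b_k'' - (1 - k²) g'' b_k = p_k` and `g c_k'' - (1 - k²) g'' c_k = q_k`. After division by
`g > 0` each is a linear equation `u'' = a u + f` with coefficients continuous on `[s₀, s₁]`. It is
solved on the whole interval as a fixed point of the Volterra operator
`u ↦ ∫_{s₀}^x (x - t) (a u + f)(t) dt` on `C([s₀, s₁])`, whose `n`-th iterate is Lipschitz with
constant `((s₁ - s₀)² ‖a‖)ⁿ / n!`, hence a contraction for large `n`.
-/

open Set

-- Cauchy's formula for `∫ₐˣ ∫ₐʸ h`: the solution of `u'' = h`, `u a = u' a = 0`.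
noncomputable def secondPrimitive (a : ℝ) (h : ℝ → ℝ) (x : ℝ) : ℝ := ∫ t in a..x, (x - t) * h t

section SecondPrimitive

variable {h : ℝ → ℝ} {a : ℝ}

theorem secondPrimitive_eq (hh : Continuous h) (x : ℝ) :
    secondPrimitive a h x = x * (∫ t in a..x, h t) - ∫ t in a..x, t * h t := by
  rw [secondPrimitive, ← intervalIntegral.integral_const_mul, ← intervalIntegral.integral_sub
    (Continuous.intervalIntegrable (by fun_prop) _ _)
    (Continuous.intervalIntegrable (by fun_prop) _ _)]
  simp only [sub_mul]

theorem hasDerivAt_secondPrimitive (hh : Continuous h) (x : ℝ) :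
    HasDerivAt (secondPrimitive a h) (∫ t in a..x, h t) x := by
  have hprim := (hh.integral_hasStrictDerivAt a x).hasDerivAt
  have hprim' := ((show Continuous fun t => t * h t by fun_prop).integral_hasStrictDerivAt
    a x).hasDerivAt
  rw [funext (secondPrimitive_eq hh)]
  exact (((hasDerivAt_id' x).fun_mul hprim).fun_sub hprim').congr_deriv (by ring)

theorem deriv_secondPrimitive (hh : Continuous h) :
    deriv (secondPrimitive a h) = fun x => ∫ t in a..x, h t :=
  funext fun x => (hasDerivAt_secondPrimitive hh x).deriv

theorem deriv_deriv_secondPrimitive (hh : Continuous h) :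
    deriv (deriv (secondPrimitive a h)) = h := by
  rw [deriv_secondPrimitive hh]
  exact funext (hh.deriv_integral h a)

theorem contDiff_secondPrimitive (hh : Continuous h) : ContDiff ℝ 2 (secondPrimitive a h) := by
  rw [show (2 : WithTop ℕ∞) = 1 + 1 from rfl, contDiff_succ_iff_deriv, deriv_secondPrimitive hh,
    show (1 : WithTop ℕ∞) = 0 + 1 from rfl, contDiff_succ_iff_deriv,
    funext (hh.deriv_integral h a)]
  exact ⟨fun x => (hasDerivAt_secondPrimitive hh x).differentiableAt, by simp,
    fun x => (hh.integral_hasStrictDerivAt a x).hasDerivAt.differentiableAt, by simp,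
    contDiff_zero.2 hh⟩

theorem secondPrimitive_sub_secondPrimitive {k : ℝ → ℝ} (hh : Continuous h) (hk : Continuous k)
    (x : ℝ) :
    secondPrimitive a h x - secondPrimitive a k x = secondPrimitive a (h - k) x := by
  rw [secondPrimitive, secondPrimitive, secondPrimitive, ← intervalIntegral.integral_sub
    (Continuous.intervalIntegrable (by fun_prop) _ _)
    (Continuous.intervalIntegrable (by fun_prop) _ _)]
  simp only [Pi.sub_apply, mul_sub]

end SecondPrimitive

theorem abs_integral_le_mul_pow_succ_div {F : ℝ → ℝ} {a x C : ℝ} {n : ℕ} (hx : a ≤ x)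
    (hF : ∀ t ∈ Icc a x, |F t| ≤ C * (t - a) ^ n) :
    |∫ t in a..x, F t| ≤ C * (x - a) ^ (n + 1) / (n + 1) := by
  have hbound := intervalIntegral.norm_integral_le_of_norm_le (f := F)
    (g := fun t => C * (t - a) ^ n) hx (Filter.Eventually.of_forall fun t ht =>
      (Real.norm_eq_abs _).trans_le (hF t (Ioc_subset_Icc_self ht)))
    (Continuous.intervalIntegrable (μ := MeasureTheory.volume) (by fun_prop) a x)
  rw [intervalIntegral.integral_const_mul, intervalIntegral.integral_comp_sub_right
    (fun t => t ^ n), integral_pow, sub_self, zero_pow n.succ_ne_zero, sub_zero] at hbound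
  simpa [mul_div_assoc] using hbound

section Picard

variable {s₀ s₁ : ℝ} (hle : s₀ ≤ s₁) (a f : C(Icc s₀ s₁, ℝ))

theorem continuous_IccExtend_coe (u : C(Icc s₀ s₁, ℝ)) : Continuous (IccExtend hle ⇑u) :=
  continuous_IccExtend_iff.2 u.continuous

-- Fixed points solve `u'' = a u + f`, `u s₀ = u' s₀ = 0` on `[s₀, s₁]`.
noncomputable def picardMap (u : C(Icc s₀ s₁, ℝ)) : C(Icc s₀ s₁, ℝ) :=
  ⟨fun x => secondPrimitive s₀ (IccExtend hle ⇑(a * u + f)) x,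
    ((contDiff_secondPrimitive (continuous_IccExtend_coe hle _)).continuous.comp
      continuous_subtype_val)⟩

theorem picardMap_apply (u : C(Icc s₀ s₁, ℝ)) (x : Icc s₀ s₁) :
    picardMap hle a f u x = secondPrimitive s₀ (IccExtend hle ⇑(a * u + f)) x :=
  rfl

theorem picardMap_apply_sub_picardMap_apply (u v : C(Icc s₀ s₁, ℝ)) (x : Icc s₀ s₁) :
    picardMap hle a f u x - picardMap hle a f v x =
      secondPrimitive s₀ (IccExtend hle ⇑(a * (u - v))) x := by
  rw [picardMap_apply, picardMap_apply, secondPrimitive_sub_secondPrimitive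
    (continuous_IccExtend_coe hle _) (continuous_IccExtend_coe hle _)]
  congr 1
  ext t
  simp only [Pi.sub_apply, IccExtend, Function.comp_apply, ContinuousMap.add_apply,
    ContinuousMap.mul_apply, ContinuousMap.sub_apply]
  ring

theorem abs_picardMap_iterate_sub_le (n : ℕ) (u v : C(Icc s₀ s₁, ℝ)) (x : Icc s₀ s₁) :
    |(picardMap hle a f)^[n] u x - (picardMap hle a f)^[n] v x| ≤
      ((s₁ - s₀) * ‖a‖) ^ n * (x - s₀) ^ n / n.factorial * ‖u - v‖ := by
  induction n generalizing x with
  | zero =>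
    simpa [← Real.norm_eq_abs] using (u - v).norm_coe_le_norm x
  | succ n ih =>
    set w := (picardMap hle a f)^[n] u
    set w' := (picardMap hle a f)^[n] v
    rw [Function.iterate_succ_apply', Function.iterate_succ_apply',
      picardMap_apply_sub_picardMap_apply, secondPrimitive]
    have hstep : ∀ t ∈ Icc s₀ (x : ℝ), |(x - t) * IccExtend hle ⇑(a * (w - w')) t| ≤
        ((s₁ - s₀) * ‖a‖) ^ (n + 1) / n.factorial * ‖u - v‖ * (t - s₀) ^ n := by
      intro t ht
      have htI : t ∈ Icc s₀ s₁ := ⟨ht.1, ht.2.trans x.2.2⟩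
      rw [IccExtend_of_mem hle _ htI, ContinuousMap.mul_apply, ContinuousMap.sub_apply,
        abs_mul, abs_mul]
      have hxt : |(x : ℝ) - t| ≤ s₁ - s₀ := by
        rw [abs_of_nonneg (sub_nonneg.2 ht.2)]
        linarith [x.2.2, ht.1]
      have hat : |a ⟨t, htI⟩| ≤ ‖a‖ := a.norm_coe_le_norm _
      calc |(x : ℝ) - t| * (|a ⟨t, htI⟩| * |w ⟨t, htI⟩ - w' ⟨t, htI⟩|)
          ≤ (s₁ - s₀) *
              (‖a‖ * (((s₁ - s₀) * ‖a‖) ^ n * (t - s₀) ^ n / n.factorial * ‖u - v‖)) := by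
            gcongr
            exact ih ⟨t, htI⟩
        _ = ((s₁ - s₀) * ‖a‖) ^ (n + 1) / n.factorial * ‖u - v‖ * (t - s₀) ^ n := by ring
    calc _ ≤ ((s₁ - s₀) * ‖a‖) ^ (n + 1) / n.factorial * ‖u - v‖ * ((x : ℝ) - s₀) ^ (n + 1) /
          (n + 1) :=
          abs_integral_le_mul_pow_succ_div x.2.1 hstep
      _ = _ := by
          rw [Nat.factorial_succ]
          push_cast
          field_simp

theorem dist_picardMap_iterate_le (n : ℕ) (u v : C(Icc s₀ s₁, ℝ)) :
    dist ((picardMap hle a f)^[n] u) ((picardMap hle a f)^[n] v) ≤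
      ((s₁ - s₀) ^ 2 * ‖a‖) ^ n / n.factorial * dist u v := by
  rw [dist_eq_norm, dist_eq_norm]
  refine (ContinuousMap.norm_le _ (by positivity)).2 fun x => ?_
  have hx : (x : ℝ) - s₀ ≤ s₁ - s₀ := by linarith [x.2.2]
  calc _ ≤ ((s₁ - s₀) * ‖a‖) ^ n * (x - s₀) ^ n / n.factorial * ‖u - v‖ :=
        abs_picardMap_iterate_sub_le hle a f n u v x
    _ ≤ ((s₁ - s₀) * ‖a‖) ^ n * (s₁ - s₀) ^ n / n.factorial * ‖u - v‖ := by
        have : 0 ≤ (x : ℝ) - s₀ := sub_nonneg.2 x.2.1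
        gcongr
    _ = _ := by
        rw [show (s₁ - s₀) ^ 2 * ‖a‖ = (s₁ - s₀) * ‖a‖ * (s₁ - s₀) by ring,
          mul_pow ((s₁ - s₀) * ‖a‖)]

theorem exists_isFixedPt_picardMap : ∃ u, Function.IsFixedPt (picardMap hle a f) u := by
  -- `picardMap` itself need not contract, but the `n!` makes some iterate a contraction.
  obtain ⟨n, hn⟩ := (FloorSemiring.tendsto_pow_div_factorial_atTop ((s₁ - s₀) ^ 2 * ‖a‖)
    |>.eventually (gt_mem_nhds zero_lt_one)).exists
  have hK : (0 : ℝ) ≤ ((s₁ - s₀) ^ 2 * ‖a‖) ^ n / n.factorial := by positivity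
  have hcontr : ContractingWith ⟨_, hK⟩ (picardMap hle a f)^[n] :=
    ⟨hn, LipschitzWith.of_dist_le_mul (dist_picardMap_iterate_le hle a f n)⟩
  exact ⟨_, hcontr.isFixedPt_fixedPoint_iterate⟩

end Picard

theorem exists_contDiff_deriv_deriv_eq {s₀ s₁ : ℝ} (hle : s₀ ≤ s₁) {a f : ℝ → ℝ}
    (ha : ContinuousOn a (Icc s₀ s₁)) (hf : ContinuousOn f (Icc s₀ s₁)) :
    ∃ u : ℝ → ℝ, ContDiff ℝ 2 u ∧ ∀ s ∈ Icc s₀ s₁, deriv (deriv u) s = a s * u s + f s := by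
  set a' : C(Icc s₀ s₁, ℝ) := ⟨_, ha.domRestrict⟩
  set f' : C(Icc s₀ s₁, ℝ) := ⟨_, hf.domRestrict⟩
  obtain ⟨w, hw⟩ := exists_isFixedPt_picardMap hle a' f'
  refine ⟨secondPrimitive s₀ (IccExtend hle ⇑(a' * w + f')),
    contDiff_secondPrimitive (continuous_IccExtend_coe hle _), fun s hs => ?_⟩
  rw [deriv_deriv_secondPrimitive (continuous_IccExtend_coe hle _), IccExtend_of_mem hle _ hs,
    ← picardMap_apply hle a' f' w ⟨s, hs⟩, hw]
  rfl

theorem exists_contDiff_mul_deriv_deriv_sub_mul_eq {s₀ s₁ : ℝ} (hle : s₀ ≤ s₁) {g c r : ℝ → ℝ}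
    (hg : ContinuousOn g (Icc s₀ s₁)) (hgpos : ∀ s ∈ Icc s₀ s₁, 0 < g s)
    (hc : ContinuousOn c (Icc s₀ s₁)) (hr : ContinuousOn r (Icc s₀ s₁)) :
    ∃ u : ℝ → ℝ, ContDiff ℝ 2 u ∧
      ∀ s ∈ Icc s₀ s₁, g s * deriv (deriv u) s - c s * u s = r s := by
  have hg₀ : ∀ s ∈ Icc s₀ s₁, g s ≠ 0 := fun s hs => (hgpos s hs).ne'
  obtain ⟨u, hu, hode⟩ := exists_contDiff_deriv_deriv_eq hle (hc.div hg hg₀) (hr.div hg hg₀)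
  refine ⟨u, hu, fun s hs => ?_⟩
  rw [hode s hs, Pi.div_apply, Pi.div_apply]
  field_simp [hg₀ s hs]
  ring

-- `γ 0` does not enter: there is no `sin (0 θ)` term.
noncomputable def trigPoly (N : ℕ) (β γ : ℕ → ℝ) (θ : ℝ) : ℝ :=
  β 0 + ∑ k ∈ Finset.Icc 1 N, (β k * Real.cos (k * θ) + γ k * Real.sin (k * θ))

theorem hasDerivAt_trigPoly (N : ℕ) (β γ : ℕ → ℝ) (θ : ℝ) :
    HasDerivAt (trigPoly N β γ) (trigPoly N (fun k => k * γ k) (fun k => -(k * β k)) θ) θ := by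
  have hlin : ∀ k : ℕ, HasDerivAt (fun x : ℝ => (k : ℝ) * x) k θ := fun k => by
    simpa using (hasDerivAt_id θ).const_mul (k : ℝ)
  refine ((hasDerivAt_const θ (β 0)).fun_add (HasDerivAt.fun_sum (u := Finset.Icc 1 N)
    fun k _ => (((hlin k).cos).const_mul (β k)).fun_add
      (((hlin k).sin).const_mul (γ k)))).congr_deriv ?_
  simp only [trigPoly, CharP.cast_eq_zero, zero_mul, zero_add]
  exact Finset.sum_congr rfl fun k _ => by ring

theorem deriv_deriv_trigPoly (N : ℕ) (β γ : ℕ → ℝ) (θ : ℝ) :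
    deriv (deriv (trigPoly N β γ)) θ =
      trigPoly N (fun k => -(k ^ 2 * β k)) (fun k => -(k ^ 2 * γ k)) θ := by
  rw [funext fun θ => (hasDerivAt_trigPoly N β γ θ).deriv, (hasDerivAt_trigPoly N _ _ θ).deriv]
  congr 1 <;> ext k <;> ring

theorem hasDerivAt_trigPoly_coeff (N : ℕ) {β γ β' γ' : ℕ → ℝ → ℝ} {s : ℝ}
    (hβ : ∀ k, HasDerivAt (β k) (β' k s) s) (hγ : ∀ k, HasDerivAt (γ k) (γ' k s) s) (θ : ℝ) :
    HasDerivAt (fun v => trigPoly N (β · v) (γ · v) θ) (trigPoly N (β' · s) (γ' · s) θ) s :=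
  (hβ 0).fun_add (HasDerivAt.fun_sum fun k _ =>
    ((hβ k).mul_const _).fun_add ((hγ k).mul_const _))

theorem deriv_deriv_trigPoly_coeff (N : ℕ) {β γ : ℕ → ℝ → ℝ}
    (hβ : ∀ k, ContDiff ℝ 2 (β k)) (hγ : ∀ k, ContDiff ℝ 2 (γ k)) (θ s : ℝ) :
    deriv (deriv fun v => trigPoly N (β · v) (γ · v) θ) s =
      trigPoly N (fun k => deriv (deriv (β k)) s) (fun k => deriv (deriv (γ k)) s) θ := by
  have hderiv : deriv (fun v => trigPoly N (β · v) (γ · v) θ) =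
      fun v => trigPoly N (fun k => deriv (β k) v) (fun k => deriv (γ k) v) θ :=
    funext fun v => (hasDerivAt_trigPoly_coeff N
      (fun k => ((hβ k).differentiable two_ne_zero v).hasDerivAt)
      (fun k => ((hγ k).differentiable two_ne_zero v).hasDerivAt) θ).deriv
  rw [hderiv]
  exact (hasDerivAt_trigPoly_coeff N (fun k => ((hβ k).differentiable_deriv_two s).hasDerivAt)
    (fun k => ((hγ k).differentiable_deriv_two s).hasDerivAt) θ).deriv

theorem contDiff_trigPoly_coeff (N : ℕ) {n : WithTop ℕ∞} {β γ : ℕ → ℝ → ℝ}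
    (hβ : ∀ k, ContDiff ℝ n (β k)) (hγ : ∀ k, ContDiff ℝ n (γ k)) (θ : ℝ) :
    ContDiff ℝ n fun v => trigPoly N (β · v) (γ · v) θ :=
  (hβ 0).add (ContDiff.sum fun k _ =>
    ((hβ k).mul contDiff_const).add ((hγ k).mul contDiff_const))

theorem derivWithin_derivWithin_eq_deriv_deriv {F : ℝ → ℝ} {s : Set ℝ} {x : ℝ}
    (hs : UniqueDiffOn ℝ s) (hF : ContDiff ℝ 2 F) (hx : x ∈ s) :
    derivWithin (derivWithin F s) s x = deriv (deriv F) x := by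
  have h := iteratedDerivWithin_eq_iteratedDeriv hs hF.contDiffAt hx
  rwa [iteratedDerivWithin_eq_iterate, iteratedDeriv_eq_iterate] at h

theorem mul_trigPoly_sub_mul_trigPoly_eq {N : ℕ} {x y : ℝ} {β γ β'' γ'' p q : ℕ → ℝ}
    (hβ : ∀ k ≤ N, x * β'' k - (1 - k ^ 2) * y * β k = p k)
    (hγ : ∀ k, 1 ≤ k → k ≤ N → x * γ'' k - (1 - k ^ 2) * y * γ k = q k) (θ : ℝ) :
    x * trigPoly N β'' γ'' θ - y * (trigPoly N β γ θ +
      trigPoly N (fun k => -(k ^ 2 * β k)) (fun k => -(k ^ 2 * γ k)) θ) = trigPoly N p q θ := by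
  have hterm : ∀ k ∈ Finset.Icc 1 N, p k * Real.cos (k * θ) + q k * Real.sin (k * θ) =
      x * (β'' k * Real.cos (k * θ) + γ'' k * Real.sin (k * θ)) -
        y * ((β k * Real.cos (k * θ) + γ k * Real.sin (k * θ)) +
          (-(k ^ 2 * β k) * Real.cos (k * θ) + -(k ^ 2 * γ k) * Real.sin (k * θ))) := by
    intro k hk
    obtain ⟨hk₁, hkN⟩ := Finset.mem_Icc.1 hk
    rw [← hβ k hkN, ← hγ k hk₁ hkN]
    ring
  have h₀ := hβ 0 (Nat.zero_le N)
  simp only [trigPoly, Finset.sum_congr rfl hterm, ← h₀, Finset.sum_sub_distrib,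
    Finset.sum_add_distrib, ← Finset.mul_sum]
  push_cast
  ring

/-- Solvability of the auxiliary ODE system (8.2) for surfaces of revolution: given `g > 0`
of class `C²` on `[s₀,s₁]` and a trigonometric polynomial datum
`ψ(s,θ) = p₀(s) + Σ_{k=1}^N (p_k(s) cos kθ + q_k(s) sin kθ)` with continuous coefficients,
there is a trigonometric polynomial `b` with `C²` coefficients solving
`g ∂²_s b − g'' (b + ∂²_θ b) = ψ` on `[s₀,s₁] × ℝ`. -/
theorem stmt7 (s₀ s₁ : ℝ) (hs : s₀ < s₁) (g : ℝ → ℝ)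
    (hg : ContDiffOn ℝ 2 g (Icc s₀ s₁)) (hgpos : ∀ s ∈ Icc s₀ s₁, 0 < g s)
    (N : ℕ) (p q : ℕ → ℝ → ℝ)
    (hp : ∀ k, k ≤ N → ContinuousOn (p k) (Icc s₀ s₁))
    (hq : ∀ k, 1 ≤ k → k ≤ N → ContinuousOn (q k) (Icc s₀ s₁))
    (ψ : ℝ → ℝ → ℝ)
    (hψ : ∀ s θ : ℝ, ψ s θ = p 0 s + ∑ k ∈ Finset.Icc 1 N,
      (p k s * Real.cos (k * θ) + q k s * Real.sin (k * θ))) :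
    ∃ b c : ℕ → ℝ → ℝ,
      (∀ k, k ≤ N → ContDiffOn ℝ 2 (b k) (Icc s₀ s₁)) ∧
      (∀ k, k ≤ N → ContDiffOn ℝ 2 (c k) (Icc s₀ s₁)) ∧
      ∀ s ∈ Icc s₀ s₁, ∀ θ : ℝ,
        g s *
            derivWithin (fun u : ℝ =>
              derivWithin (fun v : ℝ => b 0 v + ∑ k ∈ Finset.Icc 1 N,
                  (b k v * Real.cos (k * θ) + c k v * Real.sin (k * θ)))
                (Icc s₀ s₁) u) (Icc s₀ s₁) s
          - derivWithin (derivWithin g (Icc s₀ s₁)) (Icc s₀ s₁) s *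
            ((b 0 s + ∑ k ∈ Finset.Icc 1 N,
                (b k s * Real.cos (k * θ) + c k s * Real.sin (k * θ)))
              + deriv (deriv (fun φ : ℝ => b 0 s + ∑ k ∈ Finset.Icc 1 N,
                  (b k s * Real.cos (k * φ) + c k s * Real.sin (k * φ)))) θ)
          = ψ s θ := by
  have hI := uniqueDiffOn_Icc hs
  set G := derivWithin (derivWithin g (Icc s₀ s₁)) (Icc s₀ s₁)
  have hG : ContinuousOn G (Icc s₀ s₁) :=
    ((hg.derivWithin hI (m := 1) (by norm_num)).derivWithin hI (m := 0)
      (by norm_num)).continuousOn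
  -- One solution for every datum `r`, so that `choose` yields all modes `b k`, `c k` at once.
  have hmode : ∀ (k : ℕ) (r : ℝ → ℝ), ∃ u : ℝ → ℝ, ContDiff ℝ 2 u ∧
      (ContinuousOn r (Icc s₀ s₁) → ∀ s ∈ Icc s₀ s₁,
        g s * deriv (deriv u) s - (1 - k ^ 2) * G s * u s = r s) := by
    intro k r
    by_cases hr : ContinuousOn r (Icc s₀ s₁)
    · obtain ⟨u, hu, hode⟩ := exists_contDiff_mul_deriv_deriv_sub_mul_eq hs.le hg.continuousOn
        hgpos (continuousOn_const.mul hG) hr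
      exact ⟨u, hu, fun _ => hode⟩
    · exact ⟨0, contDiff_const, fun h => absurd h hr⟩
  choose u hu hode using hmode
  refine ⟨fun k => u k (p k), fun k => u k (q k), fun k _ => (hu _ _).contDiffOn,
    fun k _ => (hu _ _).contDiffOn, fun s hsI θ => ?_⟩
  have key := mul_trigPoly_sub_mul_trigPoly_eq (θ := θ)
    (fun k hk => hode k (p k) (hp k hk) s hsI)
    (fun k hk₁ hkN => hode k (q k) (hq k hk₁ hkN) s hsI)
  rw [← deriv_deriv_trigPoly, ← deriv_deriv_trigPoly_coeff N (fun k => hu k (p k))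
    (fun k => hu k (q k)), ← derivWithin_derivWithin_eq_deriv_deriv hI
    (contDiff_trigPoly_coeff N (fun k => hu k (p k)) (fun k => hu k (q k)) θ) hsI] at key
  rw [hψ]
  exact key
end

section
/- Let s₀ < s₁ be real numbers, let g : [s₀, s₁] → ℝ be twice continuously differentiable with g(s) > 0 for all s, and let N ∈ ℕ. Let B₁₁, B₁₂, B₂₂ : [s₀, s₁] × ℝ → ℝ each be of the form β₀(s) + Σ_{k=1}^{N} ( β_k(s) cos(kθ) + γ_k(s) sin(kθ) ) with twice continuously differentiable coefficients β_k, γ_k : [s₀, s₁] → ℝ. Then there exist continuously differentiable functions a, b, c : [s₀, s₁] × ℝ → ℝ, each 2π-periodic in the second variable, such that for all (s, θ): g'(s) ∂_s a(s,θ) + ∂_s c(s,θ) = B₁₁(s,θ); ∂_θ b(s,θ) + a(s,θ) = B₂₂(s,θ); and g'(s)( ∂_θ a(s,θ) − b(s,θ) ) + g(s) ∂_s b(s,θ) + ∂_θ c(s,θ) = 2 B₁₂(s,θ). -/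
/-!
The system is linear in `(a, b, c, B)` and commutes with rotations in `θ`, so it splits into
Fourier modes. In mode `k` the cosine parts of `a, c` are coupled only to the sine part of `b`
(and vice versa, with `k` replaced by `-k`); eliminating `a = B₂₂ - k b` turns the two remaining
equations into a linear first-order system for `(b, c)` in `s` whose coefficients involve `g'/g`,
`k/g` and the data. Since `g > 0` these coefficients are continuous on `[s₀, s₁]`, and a linear
system has a solution on the whole interval: Picard–Lindelöf gives solutions on steps whose length
depends only on the Lipschitz constant, and these are glued. Summing the modes gives `a, b, c`.
-/

open Set

open scoped NNReal

section IntegralCurve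

variable {E : Type*} [NormedAddCommGroup E] [NormedSpace ℝ E] {γ γ' : ℝ → E} {v : ℝ → E → E}
  {s t : Set ℝ}

theorem IsIntegralCurveOn.congr (h : IsIntegralCurveOn γ v s) (heq : EqOn γ' γ s) :
    IsIntegralCurveOn γ' v s := fun x hx => by
  rw [heq hx]
  exact (h x hx).congr heq (heq hx)

theorem IsIntegralCurveOn.union_of_isClosed (hs : IsClosed s) (ht : IsClosed t)
    (h₁ : IsIntegralCurveOn γ v s) (h₂ : IsIntegralCurveOn γ v t) :
    IsIntegralCurveOn γ v (s ∪ t) := by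
  intro x _
  have within : ∀ u : Set ℝ, IsClosed u → IsIntegralCurveOn γ v u →
      HasDerivWithinAt γ (v x (γ x)) u x := fun u hu h => by
    by_cases hx : x ∈ u
    · exact h x hx
    · exact HasFDerivWithinAt.of_notMem_closure (by rwa [hu.closure_eq])
  exact (within s hs h₁).union (within t ht h₂)

theorem IsIntegralCurveOn.piecewise_Icc {a m b : ℝ} {γ₁ γ₂ : ℝ → E}
    (h₁ : IsIntegralCurveOn γ₁ v (Icc a m)) (h₂ : IsIntegralCurveOn γ₂ v (Icc m b))
    (hm : γ₁ m = γ₂ m) (ham : a ≤ m) (hmb : m ≤ b) :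
    IsIntegralCurveOn ((Iic m).piecewise γ₁ γ₂) v (Icc a b) := by
  have eq₁ : EqOn ((Iic m).piecewise γ₁ γ₂) γ₁ (Icc a m) := fun x hx =>
    piecewise_eq_of_mem _ _ _ (mem_Iic.mpr hx.2)
  have eq₂ : EqOn ((Iic m).piecewise γ₁ γ₂) γ₂ (Icc m b) := fun x hx => by
    rcases hx.1.eq_or_lt with rfl | hlt
    · exact (eq₁ ⟨ham, le_rfl⟩).trans hm
    · exact piecewise_eq_of_notMem _ _ _ (notMem_Iic.mpr hlt)
  rw [← Icc_union_Icc_eq_Icc ham hmb]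
  exact (h₁.congr eq₁).union_of_isClosed isClosed_Icc isClosed_Icc (h₂.congr eq₂)

end IntegralCurve

section GlobalExistence

variable {E : Type*} [NormedAddCommGroup E] [NormedSpace ℝ E] [CompleteSpace E]
  {v : ℝ → E → E} {K : ℝ≥0} {a b : ℝ}

/-- The admissible step `t₁ - t₀` depends on `K` only, not on the initial value: this is what
lets local solutions be continued over all of `[a, b]`. -/
theorem exists_isIntegralCurveOn_Icc_of_mul_le {t₀ t₁ : ℝ}
    (hv : ∀ t ∈ Icc a b, LipschitzWith K (v t)) (hc : ∀ x, ContinuousOn (v · x) (Icc a b))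
    (ht₀ : a ≤ t₀) (ht : t₀ ≤ t₁) (ht₁ : t₁ ≤ b) (hK : K * (t₁ - t₀) ≤ 1 / 2) (x₀ : E) :
    ∃ γ : ℝ → E, γ t₀ = x₀ ∧ IsIntegralCurveOn γ v (Icc t₀ t₁) := by
  have hsub : Icc t₀ t₁ ⊆ Icc a b := Icc_subset_Icc ht₀ ht₁
  obtain ⟨H, hH⟩ := isCompact_Icc.exists_bound_of_continuousOn (hc x₀)
  have hH₀ : 0 ≤ H := (norm_nonneg _).trans (hH t₀ (hsub (left_mem_Icc.mpr ht)))
  have hT : 0 ≤ t₁ - t₀ := sub_nonneg.mpr ht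
  set R := 2 * H * (t₁ - t₀)
  have hR : 0 ≤ R := by positivity
  have hpl : IsPicardLindelof v (⟨t₀, left_mem_Icc.mpr ht⟩ : Icc t₀ t₁) x₀ ⟨R, hR⟩ 0
      ⟨K * R + H, by positivity⟩ K :=
    { lipschitzOnWith := fun t ht => (hv t (hsub ht)).lipschitzOnWith
      continuousOn := fun x _ => (hc x).mono hsub
      norm_le := fun t ht x hx => by
        have hx' : ‖x - x₀‖ ≤ R := mem_closedBall_iff_norm.mp hx
        calc ‖v t x‖ ≤ ‖v t x - v t x₀‖ + ‖v t x₀‖ := norm_le_norm_sub_add _ _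
          _ ≤ K * ‖x - x₀‖ + H := by
            gcongr
            · exact (hv t (hsub ht)).norm_sub_le x x₀
            · exact hH t (hsub ht)
          _ ≤ K * R + H := by gcongr
      mul_max_le := by
        change (K * R + H) * max (t₁ - t₀) (t₀ - t₀) ≤ R - 0
        rw [max_eq_left (by linarith), sub_zero]
        nlinarith [mul_nonneg hH₀ hT] }
  exact hpl.exists_eq_forall_mem_Icc_hasDerivWithinAt₀

theorem exists_isIntegralCurveOn_Icc (hab : a ≤ b)
    (hv : ∀ t ∈ Icc a b, LipschitzWith K (v t)) (hc : ∀ x, ContinuousOn (v · x) (Icc a b))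
    (x₀ : E) : ∃ γ : ℝ → E, γ a = x₀ ∧ IsIntegralCurveOn γ v (Icc a b) := by
  set δ : ℝ := 1 / (2 * (K + 1))
  have hδ : 0 < δ := by positivity
  have hKδ : K * δ ≤ 1 / 2 := by
    rw [mul_one_div, div_le_div_iff₀ (by positivity) two_pos]
    linarith
  have reach : ∀ n : ℕ, ∀ t₁ ∈ Icc a b, t₁ ≤ a + (n + 1) * δ →
      ∃ γ : ℝ → E, γ a = x₀ ∧ IsIntegralCurveOn γ v (Icc a t₁) := by
    intro n
    induction n with
    | zero =>
      intro t₁ ht₁ hle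
      push_cast at hle
      refine exists_isIntegralCurveOn_Icc_of_mul_le hv hc le_rfl ht₁.1 ht₁.2 ?_ x₀
      calc (K : ℝ) * (t₁ - a) ≤ K * δ := by gcongr; linarith
        _ ≤ 1 / 2 := hKδ
    | succ n ih =>
      intro t₁ ht₁ hle
      by_cases hfar : t₁ ≤ a + (n + 1) * δ
      · exact ih t₁ ht₁ hfar
      set m := a + (n + 1) * δ
      have ham : a ≤ m := le_add_of_nonneg_right (by positivity)
      obtain ⟨γ₁, hγ₁a, hγ₁⟩ := ih m ⟨ham, by linarith [ht₁.2]⟩ le_rfl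
      obtain ⟨γ₂, hγ₂m, hγ₂⟩ := exists_isIntegralCurveOn_Icc_of_mul_le hv hc ham (by linarith)
        ht₁.2 (by
          calc (K : ℝ) * (t₁ - m) ≤ K * δ := by gcongr; push_cast at hle; linarith
            _ ≤ 1 / 2 := hKδ) (γ₁ m)
      exact ⟨_, by simp [piecewise_eq_of_mem _ _ _ (mem_Iic.mpr ham), hγ₁a],
        hγ₁.piecewise_Icc hγ₂ hγ₂m.symm ham (by linarith)⟩
  obtain ⟨n, hn⟩ := exists_nat_ge ((b - a) / δ)
  refine reach n b ⟨hab, le_rfl⟩ ?_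
  rw [div_le_iff₀ hδ] at hn
  linarith

theorem exists_isIntegralCurveOn_Icc_linear (hab : a ≤ b) {A : ℝ → E →L[ℝ] E} {h : ℝ → E}
    (hA : ContinuousOn A (Icc a b)) (hh : ContinuousOn h (Icc a b)) :
    ∃ γ : ℝ → E, IsIntegralCurveOn γ (fun t x => A t x + h t) (Icc a b) := by
  obtain ⟨M, hM⟩ := isCompact_Icc.exists_bound_of_continuousOn hA
  have hlip : ∀ t ∈ Icc a b, LipschitzWith M.toNNReal (fun x => A t x + h t) := fun t ht =>
    LipschitzWith.of_dist_le_mul fun x y => by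
      rw [dist_add_right, dist_eq_norm, dist_eq_norm, ← map_sub, Real.coe_toNNReal']
      exact (A t).le_of_opNorm_le ((hM t ht).trans (le_max_left _ _)) _
  obtain ⟨γ, -, hγ⟩ := exists_isIntegralCurveOn_Icc hab hlip
    (fun x => (hA.clm_apply continuousOn_const).add hh) 0
  exact ⟨γ, hγ⟩

end GlobalExistence

open ContinuousLinearMap in
theorem exists_hasDerivWithinAt_planar_linear {a b : ℝ} (hab : a ≤ b)
    {p₁₁ p₁₂ p₂₁ p₂₂ q₁ q₂ : ℝ → ℝ}
    (h₁₁ : ContinuousOn p₁₁ (Icc a b)) (h₁₂ : ContinuousOn p₁₂ (Icc a b))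
    (h₂₁ : ContinuousOn p₂₁ (Icc a b)) (h₂₂ : ContinuousOn p₂₂ (Icc a b))
    (hq₁ : ContinuousOn q₁ (Icc a b)) (hq₂ : ContinuousOn q₂ (Icc a b)) :
    ∃ x y : ℝ → ℝ, ∀ t ∈ Icc a b,
      HasDerivWithinAt x (p₁₁ t * x t + p₁₂ t * y t + q₁ t) (Icc a b) t ∧
      HasDerivWithinAt y (p₂₁ t * x t + p₂₂ t * y t + q₂ t) (Icc a b) t := by
  set A : ℝ → ℝ × ℝ →L[ℝ] ℝ × ℝ := fun t =>
    p₁₁ t • (inl ℝ ℝ ℝ ∘L fst ℝ ℝ ℝ) + p₁₂ t • (inl ℝ ℝ ℝ ∘L snd ℝ ℝ ℝ) +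
      p₂₁ t • (inr ℝ ℝ ℝ ∘L fst ℝ ℝ ℝ) + p₂₂ t • (inr ℝ ℝ ℝ ∘L snd ℝ ℝ ℝ)
  have hA : ContinuousOn A (Icc a b) := by fun_prop
  obtain ⟨γ, hγ⟩ := exists_isIntegralCurveOn_Icc_linear hab hA (hq₁.prodMk hq₂)
  refine ⟨fun t => (γ t).1, fun t => (γ t).2, fun t ht => ⟨?_, ?_⟩⟩
  · exact (hasFDerivAt_fst.comp_hasDerivWithinAt t (hγ t ht)).congr_deriv (by simp [A])
  · exact (hasFDerivAt_snd.comp_hasDerivWithinAt t (hγ t ht)).congr_deriv (by simp [A])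

theorem contDiffOn_one_of_hasDerivWithinAt {s : Set ℝ} {f f' : ℝ → ℝ} (hs : UniqueDiffOn ℝ s)
    (hf : ∀ x ∈ s, HasDerivWithinAt f (f' x) s x) (hf' : ContinuousOn f' s) :
    ContDiffOn ℝ 1 f s :=
  (contDiffOn_one_iff_derivWithin hs).2 ⟨fun x hx => (hf x hx).differentiableWithinAt,
    hf'.congr fun x hx => (hf x hx).derivWithin (hs x hx)⟩

theorem exists_strainCoeff_solution (k : ℝ) {s₀ s₁ : ℝ} (hs : s₀ < s₁) {g f₁ f₂ f₃ : ℝ → ℝ}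
    (hg : ContDiffOn ℝ 1 g (Icc s₀ s₁)) (hg₀ : ∀ s ∈ Icc s₀ s₁, g s ≠ 0)
    (hf₁ : ContinuousOn f₁ (Icc s₀ s₁)) (hf₂ : ContDiffOn ℝ 1 f₂ (Icc s₀ s₁))
    (hf₃ : ContinuousOn f₃ (Icc s₀ s₁)) :
    ∃ a b c : ℝ → ℝ, ContDiffOn ℝ 1 a (Icc s₀ s₁) ∧ ContDiffOn ℝ 1 b (Icc s₀ s₁) ∧
      ContDiffOn ℝ 1 c (Icc s₀ s₁) ∧ ∀ s ∈ Icc s₀ s₁,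
        derivWithin g (Icc s₀ s₁) s * derivWithin a (Icc s₀ s₁) s
            + derivWithin c (Icc s₀ s₁) s = f₁ s ∧
        a s + k * b s = f₂ s ∧
        -(derivWithin g (Icc s₀ s₁) s * (k * a s + b s)) + g s * derivWithin b (Icc s₀ s₁) s
            - k * c s = 2 * f₃ s := by
  set I := Icc s₀ s₁
  have hI : UniqueDiffOn ℝ I := uniqueDiffOn_Icc hs
  set g' := derivWithin g I
  set f₂' := derivWithin f₂ I
  have hg' : ContinuousOn g' I := hg.continuousOn_derivWithin hI le_rfl
  have hf₂' : ContinuousOn f₂' I := hf₂.continuousOn_derivWithin hI le_rfl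
  have hgc : ContinuousOn g I := hg.continuousOn
  have hf₂c : ContinuousOn f₂ I := hf₂.continuousOn
  -- with `a = f₂ - k b` the last equation solves for `b'`, and then the first one for `c'`
  set q : ℝ → ℝ := fun s => (2 * f₃ s + k * g' s * f₂ s) / g s
  obtain ⟨b, c, hbc⟩ := exists_hasDerivWithinAt_planar_linear hs.le
    (p₁₁ := fun s => g' s * (1 - k ^ 2) / g s) (p₁₂ := fun s => k / g s)
    (p₂₁ := fun s => k * g' s * (g' s * (1 - k ^ 2) / g s)) (p₂₂ := fun s => k * g' s * (k / g s))
    (q₁ := q) (q₂ := fun s => k * g' s * q s + f₁ s - g' s * f₂' s)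
    (by fun_prop (disch := assumption)) (by fun_prop (disch := assumption))
    (by fun_prop (disch := assumption)) (by fun_prop (disch := assumption))
    (by fun_prop (disch := assumption)) (by fun_prop (disch := assumption))
  set b' : ℝ → ℝ := fun s => g' s * (1 - k ^ 2) / g s * b s + k / g s * c s + q s
  have hb : ∀ s ∈ I, HasDerivWithinAt b (b' s) I s := fun s hs => (hbc s hs).1
  have hc : ∀ s ∈ I, HasDerivWithinAt c (k * g' s * b' s + f₁ s - g' s * f₂' s) I s :=
    fun s hs => (hbc s hs).2.congr_deriv (by simp only [b']; ring)
  have ha : ∀ s ∈ I, HasDerivWithinAt (fun s => f₂ s - k * b s) (f₂' s - k * b' s) I s :=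
    fun s hs => ((hf₂.differentiableOn one_ne_zero s hs).hasDerivWithinAt).sub
      ((hb s hs).const_mul k)
  have hbcont : ContinuousOn b I := fun s hs => (hb s hs).continuousWithinAt
  have hccont : ContinuousOn c I := fun s hs => (hc s hs).continuousWithinAt
  have hb'cont : ContinuousOn b' I := by fun_prop (disch := assumption)
  refine ⟨fun s => f₂ s - k * b s, b, c, contDiffOn_one_of_hasDerivWithinAt hI ha
    (by fun_prop), contDiffOn_one_of_hasDerivWithinAt hI hb hb'cont,
    contDiffOn_one_of_hasDerivWithinAt hI hc (by fun_prop), fun s hs => ⟨?_, by ring, ?_⟩⟩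
  · rw [(ha s hs).derivWithin (hI s hs), (hc s hs).derivWithin (hI s hs)]
    ring
  · rw [(hb s hs).derivWithin (hI s hs)]
    simp only [b', q]
    field_simp [hg₀ s hs]
    ring

section Slices

variable {I : Set ℝ} {a : ℝ → ℝ → ℝ} {s : ℝ}

theorem ContDiffOn.differentiableWithinAt_uncurry_left
    (ha : ContDiffOn ℝ 1 (Function.uncurry a) (I ×ˢ univ)) (hs : s ∈ I) (θ : ℝ) :
    DifferentiableWithinAt ℝ (fun u => a u θ) I s :=
  (ha.differentiableOn one_ne_zero (s, θ) ⟨hs, trivial⟩).comp s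
    (differentiableWithinAt_id.prodMk (differentiableWithinAt_const θ))
      fun _ hu => mk_mem_prod hu (mem_univ _)

theorem ContDiffOn.differentiableAt_uncurry_right
    (ha : ContDiffOn ℝ 1 (Function.uncurry a) (I ×ˢ univ)) (hs : s ∈ I) (θ : ℝ) :
    DifferentiableAt ℝ (a s) θ :=
  differentiableWithinAt_univ.mp <| (ha.differentiableOn one_ne_zero (s, θ) ⟨hs, trivial⟩).comp θ
    ((differentiableWithinAt_const s).prodMk differentiableWithinAt_id)
      fun _ _ => mk_mem_prod hs (mem_univ _)

end Slices

/-- `a, b, c` are the components of the displacement `w` in the frame `(cos θ, sin θ, 0)`,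
`(-sin θ, cos θ, 0)`, `e₃`, and the three equations are `sym ∇w = B` in the coordinates `(s, θ)`. -/
def IsStrainSolution (I : Set ℝ) (g : ℝ → ℝ) (B11 B12 B22 a b c : ℝ → ℝ → ℝ) : Prop :=
  ContDiffOn ℝ 1 (Function.uncurry a) (I ×ˢ (univ : Set ℝ)) ∧
    ContDiffOn ℝ 1 (Function.uncurry b) (I ×ˢ (univ : Set ℝ)) ∧
    ContDiffOn ℝ 1 (Function.uncurry c) (I ×ˢ (univ : Set ℝ)) ∧
    (∀ s θ : ℝ, a s (θ + 2 * Real.pi) = a s θ) ∧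
    (∀ s θ : ℝ, b s (θ + 2 * Real.pi) = b s θ) ∧
    (∀ s θ : ℝ, c s (θ + 2 * Real.pi) = c s θ) ∧
    ∀ s ∈ I, ∀ θ : ℝ,
      (derivWithin g I s * derivWithin (fun u : ℝ => a u θ) I s
          + derivWithin (fun u : ℝ => c u θ) I s = B11 s θ) ∧
      (deriv (fun φ : ℝ => b s φ) θ + a s θ = B22 s θ) ∧
      (derivWithin g I s * (deriv (fun φ : ℝ => a s φ) θ - b s θ)
          + g s * derivWithin (fun u : ℝ => b u θ) I s
          + deriv (fun φ : ℝ => c s φ) θ = 2 * B12 s θ)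

namespace IsStrainSolution

variable {I : Set ℝ} {g : ℝ → ℝ}

theorem zero : IsStrainSolution I g 0 0 0 0 0 0 := by
  simp [IsStrainSolution, Function.uncurry_def, contDiffOn_const]

theorem add {B11 B12 B22 a b c B11' B12' B22' a' b' c' : ℝ → ℝ → ℝ}
    (h : IsStrainSolution I g B11 B12 B22 a b c)
    (h' : IsStrainSolution I g B11' B12' B22' a' b' c') :
    IsStrainSolution I g (B11 + B11') (B12 + B12') (B22 + B22') (a + a') (b + b') (c + c') := by
  obtain ⟨ha, hb, hc, pa, pb, pc, e⟩ := h
  obtain ⟨ha', hb', hc', pa', pb', pc', e'⟩ := h'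
  refine ⟨ha.add ha', hb.add hb', hc.add hc', fun s θ => by simp [pa, pa'],
    fun s θ => by simp [pb, pb'], fun s θ => by simp [pc, pc'], fun s hs θ => ?_⟩
  obtain ⟨e₁, e₂, e₃⟩ := e s hs θ
  obtain ⟨e₁', e₂', e₃'⟩ := e' s hs θ
  simp only [Pi.add_apply]
  have hs_add : ∀ {f f' : ℝ → ℝ → ℝ}, ContDiffOn ℝ 1 (Function.uncurry f) (I ×ˢ univ) →
      ContDiffOn ℝ 1 (Function.uncurry f') (I ×ˢ univ) →
      derivWithin (fun u => f u θ + f' u θ) I s =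
        derivWithin (fun u => f u θ) I s + derivWithin (fun u => f' u θ) I s := fun hf hf' =>
    derivWithin_fun_add (hf.differentiableWithinAt_uncurry_left hs θ)
      (hf'.differentiableWithinAt_uncurry_left hs θ)
  have hθ_add : ∀ {f f' : ℝ → ℝ → ℝ}, ContDiffOn ℝ 1 (Function.uncurry f) (I ×ˢ univ) →
      ContDiffOn ℝ 1 (Function.uncurry f') (I ×ˢ univ) →
      deriv (fun φ => f s φ + f' s φ) θ = deriv (f s) θ + deriv (f' s) θ := fun hf hf' =>
    deriv_fun_add (hf.differentiableAt_uncurry_right hs θ) (hf'.differentiableAt_uncurry_right hs θ)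
  rw [hs_add ha ha', hs_add hb hb', hs_add hc hc', hθ_add ha ha', hθ_add hb hb', hθ_add hc hc']
  exact ⟨by linear_combination e₁ + e₁', by linear_combination e₂ + e₂',
    by linear_combination e₃ + e₃'⟩

theorem exists_sum {ι : Type*} (S : Finset ι) {B11 B12 B22 : ι → ℝ → ℝ → ℝ}
    (h : ∀ i ∈ S, ∃ a b c, IsStrainSolution I g (B11 i) (B12 i) (B22 i) a b c) :
    ∃ a b c, IsStrainSolution I g (∑ i ∈ S, B11 i) (∑ i ∈ S, B12 i) (∑ i ∈ S, B22 i) a b c := by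
  classical
  induction S using Finset.induction_on with
  | empty => exact ⟨0, 0, 0, by simpa using zero⟩
  | insert i S hi ih =>
    obtain ⟨a, b, c, hi'⟩ := h i (Finset.mem_insert_self i S)
    obtain ⟨a', b', c', hS⟩ := ih fun j hj => h j (Finset.mem_insert_of_mem hj)
    simp only [Finset.sum_insert hi]
    exact ⟨_, _, _, hi'.add hS⟩

end IsStrainSolution

noncomputable def fourierMode (k : ℕ) (α β : ℝ → ℝ) (s θ : ℝ) : ℝ :=
  α s * Real.cos (k * θ) + β s * Real.sin (k * θ)

section FourierMode

variable {k : ℕ} {α β : ℝ → ℝ}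

theorem fourierMode_add_two_pi (s θ : ℝ) :
    fourierMode k α β s (θ + 2 * Real.pi) = fourierMode k α β s θ := by
  simp only [fourierMode, mul_add, Real.cos_add_nat_mul_two_pi, Real.sin_add_nat_mul_two_pi]

theorem contDiffOn_uncurry_fourierMode {I : Set ℝ} {n : WithTop ℕ∞}
    (hα : ContDiffOn ℝ n α I) (hβ : ContDiffOn ℝ n β I) :
    ContDiffOn ℝ n (Function.uncurry (fourierMode k α β)) (I ×ˢ univ) := by
  have hfst : MapsTo Prod.fst (I ×ˢ (univ : Set ℝ)) I := fun _ hp => hp.1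
  exact ((hα.comp contDiffOn_fst hfst).mul (Real.contDiff_cos.comp
    (contDiff_const.mul contDiff_snd)).contDiffOn).add
    ((hβ.comp contDiffOn_fst hfst).mul (Real.contDiff_sin.comp
    (contDiff_const.mul contDiff_snd)).contDiffOn)

theorem derivWithin_fourierMode {I : Set ℝ} {s : ℝ} (hα : DifferentiableWithinAt ℝ α I s)
    (hβ : DifferentiableWithinAt ℝ β I s) (θ : ℝ) :
    derivWithin (fun u => fourierMode k α β u θ) I s =
      fourierMode k (derivWithin α I) (derivWithin β I) s θ := by
  simp only [fourierMode]
  rw [derivWithin_fun_add (hα.mul_const _) (hβ.mul_const _), derivWithin_mul_const hα,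
    derivWithin_mul_const hβ]

theorem deriv_fourierMode (s θ : ℝ) :
    deriv (fourierMode k α β s) θ =
      k * (β s * Real.cos (k * θ) - α s * Real.sin (k * θ)) := by
  have hk : HasDerivAt (fun φ : ℝ => (k : ℝ) * φ) k θ := by
    simpa using (hasDerivAt_id θ).const_mul (k : ℝ)
  have h := (hk.cos.const_mul (α s)).fun_add (hk.sin.const_mul (β s))
  rw [show fourierMode k α β s = fun φ => α s * Real.cos (k * φ) + β s * Real.sin (k * φ) from rfl,
    h.deriv]
  ring

end FourierMode

theorem exists_isStrainSolution_fourierMode (k : ℕ) {s₀ s₁ : ℝ} (hs : s₀ < s₁) {g : ℝ → ℝ}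
    (hg : ContDiffOn ℝ 1 g (Icc s₀ s₁)) (hg₀ : ∀ s ∈ Icc s₀ s₁, g s ≠ 0)
    {β₁₁ γ₁₁ β₁₂ γ₁₂ β₂₂ γ₂₂ : ℝ → ℝ}
    (hβ₁₁ : ContinuousOn β₁₁ (Icc s₀ s₁)) (hγ₁₁ : ContinuousOn γ₁₁ (Icc s₀ s₁))
    (hβ₁₂ : ContinuousOn β₁₂ (Icc s₀ s₁)) (hγ₁₂ : ContinuousOn γ₁₂ (Icc s₀ s₁))
    (hβ₂₂ : ContDiffOn ℝ 1 β₂₂ (Icc s₀ s₁)) (hγ₂₂ : ContDiffOn ℝ 1 γ₂₂ (Icc s₀ s₁)) :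
    ∃ a b c, IsStrainSolution (Icc s₀ s₁) g (fourierMode k β₁₁ γ₁₁) (fourierMode k β₁₂ γ₁₂)
      (fourierMode k β₂₂ γ₂₂) a b c := by
  obtain ⟨a₁, b₂, c₁, ha₁, hb₂, hc₁, e⟩ := exists_strainCoeff_solution k hs hg hg₀ hβ₁₁ hβ₂₂ hγ₁₂
  obtain ⟨a₂, b₁, c₂, ha₂, hb₁, hc₂, e'⟩ :=
    exists_strainCoeff_solution (-k) hs hg hg₀ hγ₁₁ hγ₂₂ hβ₁₂
  refine ⟨fourierMode k a₁ a₂, fourierMode k b₁ b₂, fourierMode k c₁ c₂,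
    contDiffOn_uncurry_fourierMode ha₁ ha₂, contDiffOn_uncurry_fourierMode hb₁ hb₂,
    contDiffOn_uncurry_fourierMode hc₁ hc₂, fourierMode_add_two_pi, fourierMode_add_two_pi,
    fourierMode_add_two_pi, fun s hs θ => ?_⟩
  have hd : ∀ {f : ℝ → ℝ}, ContDiffOn ℝ 1 f (Icc s₀ s₁) →
      DifferentiableWithinAt ℝ f (Icc s₀ s₁) s := fun hf => hf.differentiableOn one_ne_zero s hs
  rw [derivWithin_fourierMode (hd ha₁) (hd ha₂), derivWithin_fourierMode (hd hb₁) (hd hb₂),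
    derivWithin_fourierMode (hd hc₁) (hd hc₂), deriv_fourierMode, deriv_fourierMode,
    deriv_fourierMode]
  obtain ⟨e₁, e₂, e₃⟩ := e s hs
  obtain ⟨e₁', e₂', e₃'⟩ := e' s hs
  simp only [fourierMode]
  refine ⟨?_, ?_, ?_⟩
  · linear_combination Real.cos (k * θ) * e₁ + Real.sin (k * θ) * e₁'
  · linear_combination Real.cos (k * θ) * e₂ + Real.sin (k * θ) * e₂'
  · linear_combination Real.sin (k * θ) * e₃ + Real.cos (k * θ) * e₃'

theorem eq_fourierMode_add_sum {N : ℕ} {B : ℝ → ℝ → ℝ} {β γ : ℕ → ℝ → ℝ}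
    (hB : ∀ s θ : ℝ, B s θ = β 0 s + ∑ k ∈ Finset.Icc 1 N,
      (β k s * Real.cos (k * θ) + γ k s * Real.sin (k * θ))) :
    B = fourierMode 0 (β 0) 0 + ∑ k ∈ Finset.Icc 1 N, fourierMode k (β k) (γ k) := by
  ext s θ
  simp [hB, fourierMode, Finset.sum_apply]

/-- Solvability of the system `sym ∇w = B` in coordinates (5.6) on a surface of revolution:
given `g > 0` of class `C²` on `[s₀,s₁]` and symmetric data `B₁₁, B₁₂, B₂₂` which are
trigonometric polynomials in `θ` with `C²` coefficients, there exist `C¹` functions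
`a, b, c` on `[s₀,s₁] × ℝ`, `2π`-periodic in `θ`, satisfying
`g' ∂ₛa + ∂ₛc = B₁₁`, `∂_θ b + a = B₂₂`, `g'(∂_θ a − b) + g ∂ₛb + ∂_θ c = 2B₁₂`. -/
theorem stmt8 (s₀ s₁ : ℝ) (hs : s₀ < s₁) (g : ℝ → ℝ)
    (hg : ContDiffOn ℝ 2 g (Icc s₀ s₁)) (hgpos : ∀ s ∈ Icc s₀ s₁, 0 < g s)
    (N : ℕ) (B11 B12 B22 : ℝ → ℝ → ℝ)
    (β11 γ11 β12 γ12 β22 γ22 : ℕ → ℝ → ℝ)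
    (hβ11 : ∀ k, k ≤ N → ContDiffOn ℝ 2 (β11 k) (Icc s₀ s₁))
    (hγ11 : ∀ k, 1 ≤ k → k ≤ N → ContDiffOn ℝ 2 (γ11 k) (Icc s₀ s₁))
    (hβ12 : ∀ k, k ≤ N → ContDiffOn ℝ 2 (β12 k) (Icc s₀ s₁))
    (hγ12 : ∀ k, 1 ≤ k → k ≤ N → ContDiffOn ℝ 2 (γ12 k) (Icc s₀ s₁))
    (hβ22 : ∀ k, k ≤ N → ContDiffOn ℝ 2 (β22 k) (Icc s₀ s₁))
    (hγ22 : ∀ k, 1 ≤ k → k ≤ N → ContDiffOn ℝ 2 (γ22 k) (Icc s₀ s₁))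
    (hB11 : ∀ s θ : ℝ, B11 s θ = β11 0 s + ∑ k ∈ Finset.Icc 1 N,
      (β11 k s * Real.cos (k * θ) + γ11 k s * Real.sin (k * θ)))
    (hB12 : ∀ s θ : ℝ, B12 s θ = β12 0 s + ∑ k ∈ Finset.Icc 1 N,
      (β12 k s * Real.cos (k * θ) + γ12 k s * Real.sin (k * θ)))
    (hB22 : ∀ s θ : ℝ, B22 s θ = β22 0 s + ∑ k ∈ Finset.Icc 1 N,
      (β22 k s * Real.cos (k * θ) + γ22 k s * Real.sin (k * θ))) :
    ∃ a b c : ℝ → ℝ → ℝ,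
      ContDiffOn ℝ 1 (Function.uncurry a) (Icc s₀ s₁ ×ˢ (univ : Set ℝ)) ∧
      ContDiffOn ℝ 1 (Function.uncurry b) (Icc s₀ s₁ ×ˢ (univ : Set ℝ)) ∧
      ContDiffOn ℝ 1 (Function.uncurry c) (Icc s₀ s₁ ×ˢ (univ : Set ℝ)) ∧
      (∀ s θ : ℝ, a s (θ + 2 * Real.pi) = a s θ) ∧
      (∀ s θ : ℝ, b s (θ + 2 * Real.pi) = b s θ) ∧
      (∀ s θ : ℝ, c s (θ + 2 * Real.pi) = c s θ) ∧
      ∀ s ∈ Icc s₀ s₁, ∀ θ : ℝ,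
        (derivWithin g (Icc s₀ s₁) s * derivWithin (fun u : ℝ => a u θ) (Icc s₀ s₁) s
            + derivWithin (fun u : ℝ => c u θ) (Icc s₀ s₁) s = B11 s θ) ∧
        (deriv (fun φ : ℝ => b s φ) θ + a s θ = B22 s θ) ∧
        (derivWithin g (Icc s₀ s₁) s * (deriv (fun φ : ℝ => a s φ) θ - b s θ)
            + g s * derivWithin (fun u : ℝ => b u θ) (Icc s₀ s₁) s
            + deriv (fun φ : ℝ => c s φ) θ = 2 * B12 s θ) := by
  have hg₁ : ContDiffOn ℝ 1 g (Icc s₀ s₁) := hg.of_le one_le_two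
  have hg₀ : ∀ s ∈ Icc s₀ s₁, g s ≠ 0 := fun s hs => (hgpos s hs).ne'
  obtain ⟨a₀, b₀, c₀, h₀⟩ := exists_isStrainSolution_fourierMode 0 hs hg₁ hg₀
    (hβ11 0 N.zero_le).continuousOn continuousOn_const (hβ12 0 N.zero_le).continuousOn
    continuousOn_const ((hβ22 0 N.zero_le).of_le one_le_two) contDiffOn_const
  obtain ⟨a, b, c, h⟩ := IsStrainSolution.exists_sum (Finset.Icc 1 N) fun k hk => by
    obtain ⟨hk₁, hkN⟩ := Finset.mem_Icc.mp hk
    exact exists_isStrainSolution_fourierMode k hs hg₁ hg₀ (hβ11 k hkN).continuousOn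
      (hγ11 k hk₁ hkN).continuousOn (hβ12 k hkN).continuousOn (hγ12 k hk₁ hkN).continuousOn
      ((hβ22 k hkN).of_le one_le_two) ((hγ22 k hk₁ hkN).of_le one_le_two)
  rw [eq_fourierMode_add_sum hB11, eq_fourierMode_add_sum hB12, eq_fourierMode_add_sum hB22]
  exact ⟨_, _, _, h₀.add h⟩
end

section
/- Let n, m ≥ 1 be integers, let Ω ⊆ ℝⁿ be open and bounded, and suppose there is c₀ > 0 such that vol(Ω ∩ B(x, ρ)) ≥ c₀ ρⁿ for every x ∈ Ω and every 0 < ρ ≤ 1, where vol denotes Lebesgue measure and B(x, ρ) the open ball of radius ρ. Let K ≥ 0, let f : Ω → ℝ^m be K-Lipschitz, let E = {x ∈ Ω : f(x) = 0}, and suppose δ := vol(Ω ∖ E) < c₀. Then sup_{x ∈ Ω} ‖f(x)‖ ≤ K (δ/c₀)^{1/n}, and consequently ∫_Ω ‖f(x)‖² dx ≤ K² δ^{(n+2)/n} c₀^{-2/n}. -/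
open MeasureTheory Metric Set Filter Topology

/-!
A point `x ∈ Ω` is at distance less than `ρ` from a zero of `f` as soon as `Ω ∩ B(x, ρ)`
has more measure than `Ω ∖ E`; by the density bound this holds for every
`ρ ∈ ((δ/c₀)^{1/n}, 1]`, and the Lipschitz bound gives `‖f x‖ ≤ K ρ`; let `ρ` decrease.
The integral is then at most the square of this supremum times the measure `δ` of the set
where `f ≠ 0`.
-/

section

variable {X F : Type*} [SeminormedAddCommGroup X] [MeasurableSpace X]
  [SeminormedAddCommGroup F] {μ : Measure X} {Ω : Set X} {f : X → F} {K : ℝ}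

theorem norm_le_mul_of_measure_diff_lt (hK : 0 ≤ K)
    (hf : ∀ x ∈ Ω, ∀ y ∈ Ω, ‖f x - f y‖ ≤ K * ‖x - y‖) {x : X} (hx : x ∈ Ω) {ρ : ℝ}
    (hlt : μ (Ω \ {y ∈ Ω | f y = 0}) < μ (Ω ∩ ball x ρ)) :
    ‖f x‖ ≤ K * ρ := by
  obtain ⟨y, ⟨hyΩ, hyx⟩, hy⟩ := not_subset.mp fun h => (measure_mono h).not_gt hlt
  have hfy : f y = 0 := by_contra fun h => hy ⟨hyΩ, fun h' => h h'.2⟩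
  calc ‖f x‖ = ‖f x - f y‖ := by rw [hfy, sub_zero]
    _ ≤ K * ‖x - y‖ := hf x hx y hyΩ
    _ ≤ K * ρ := by
      gcongr
      rw [← dist_eq_norm, dist_comm]
      exact (mem_ball.mp hyx).le

theorem norm_le_mul_rpow_of_measure_ball_ge {n : ℕ} (hn : n ≠ 0) {c₀ : ℝ} (hc₀ : 0 < c₀)
    (hdens : ∀ x ∈ Ω, ∀ ρ : ℝ, 0 < ρ → ρ ≤ 1 →
      ENNReal.ofReal (c₀ * ρ ^ n) ≤ μ (Ω ∩ ball x ρ))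
    (hK : 0 ≤ K) (hf : ∀ x ∈ Ω, ∀ y ∈ Ω, ‖f x - f y‖ ≤ K * ‖x - y‖)
    (hsmall : μ (Ω \ {y ∈ Ω | f y = 0}) < ENNReal.ofReal c₀) {x : X} (hx : x ∈ Ω) :
    ‖f x‖ ≤ K * (μ.real (Ω \ {y ∈ Ω | f y = 0}) / c₀) ^ ((1 : ℝ) / n) := by
  set δ := μ.real (Ω \ {y ∈ Ω | f y = 0})
  set ρ₀ := (δ / c₀) ^ ((1 : ℝ) / n)
  have hδc : 0 ≤ δ / c₀ := div_nonneg measureReal_nonneg hc₀.le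
  have hρ₀n : ρ₀ ^ n = δ / c₀ := by
    simpa only [ρ₀, one_div] using Real.rpow_inv_natCast_pow hδc hn
  have hρ₀ : ρ₀ < 1 := Real.rpow_lt_one hδc
    ((div_lt_one hc₀).mpr (ENNReal.toReal_lt_of_lt_ofReal hsmall)) (by positivity)
  have hbound : ∀ ρ ∈ Ioc ρ₀ 1, ‖f x‖ ≤ K * ρ := by
    rintro ρ ⟨hρ₀ρ, hρ1⟩
    have hρ : 0 < ρ := (Real.rpow_nonneg hδc _).trans_lt hρ₀ρ
    refine norm_le_mul_of_measure_diff_lt (μ := μ) hK hf hx ?_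
    calc μ (Ω \ {y ∈ Ω | f y = 0})
        = ENNReal.ofReal δ := (ofReal_measureReal hsmall.ne_top).symm
      _ < ENNReal.ofReal (c₀ * ρ ^ n) := by
        refine (ENNReal.ofReal_lt_ofReal_iff (by positivity)).mpr ?_
        calc δ = c₀ * ρ₀ ^ n := by rw [hρ₀n, mul_div_cancel₀ _ hc₀.ne']
          _ < c₀ * ρ ^ n := by gcongr
      _ ≤ μ (Ω ∩ ball x ρ) := hdens x hx ρ hρ hρ1
  have hlim : Tendsto (fun ρ => K * ρ) (𝓝[>] ρ₀) (𝓝 (K * ρ₀)) :=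
    ((continuous_const.mul continuous_id).tendsto ρ₀).mono_left nhdsWithin_le_nhds
  exact ge_of_tendsto hlim (eventually_of_mem (Ioc_mem_nhdsGT hρ₀) hbound)

end

theorem setIntegral_norm_sq_le_mul_measure {X F : Type*} [MeasurableSpace X]
    [NormedAddCommGroup F] {μ : Measure X} {Ω : Set X} (hΩ : MeasurableSet Ω) {f : X → F}
    {M : ℝ} (hM : ∀ x ∈ Ω, ‖f x‖ ≤ M) (hfin : μ (Ω \ {x ∈ Ω | f x = 0}) < ⊤) :
    ∫ x in Ω, ‖f x‖ ^ 2 ∂μ ≤ M ^ 2 * μ.real (Ω \ {x ∈ Ω | f x = 0}) := by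
  rw [setIntegral_eq_of_subset_of_forall_sdiff_eq_zero (s := Ω \ {x ∈ Ω | f x = 0}) hΩ
    sdiff_subset fun x hx => by simp_all]
  refine (Real.le_norm_self _).trans (norm_setIntegral_le_of_norm_le_const hfin fun x hx => ?_)
  rw [norm_pow, norm_norm]
  exact pow_le_pow_left₀ (norm_nonneg _) (hM x hx.1) 2

theorem mul_div_rpow_sq_mul_eq {n : ℕ} (hn : n ≠ 0) (K : ℝ) {δ c : ℝ} (hδ : 0 ≤ δ)
    (hc : 0 ≤ c) :
    (K * (δ / c) ^ ((1 : ℝ) / n)) ^ 2 * δ =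
      K ^ 2 * δ ^ (((n : ℝ) + 2) / n) * c ^ (-(2 : ℝ) / n) := by
  have hn' : (n : ℝ) ≠ 0 := Nat.cast_ne_zero.mpr hn
  rw [mul_pow, ← Real.rpow_natCast ((δ / c) ^ _) 2, ← Real.rpow_mul (div_nonneg hδ hc),
    Real.div_rpow hδ hc, div_eq_mul_inv, ← Real.rpow_neg hc,
    show ((n : ℝ) + 2) / n = 1 / n * (2 : ℕ) + 1 by field_simp; push_cast; ring,
    Real.rpow_add' hδ (by positivity), Real.rpow_one]
  ring_nf

theorem stmt11_general (n m : ℕ) (hn : 1 ≤ n)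
    (Ω : Set (EuclideanSpace ℝ (Fin n))) (hΩo : IsOpen Ω)
    (c₀ : ℝ) (hc₀ : 0 < c₀)
    (hdens : ∀ x ∈ Ω, ∀ ρ : ℝ, 0 < ρ → ρ ≤ 1 →
      ENNReal.ofReal (c₀ * ρ ^ n) ≤ volume (Ω ∩ Metric.ball x ρ))
    (K : ℝ) (hK : 0 ≤ K)
    (f : EuclideanSpace ℝ (Fin n) → EuclideanSpace ℝ (Fin m))
    (hf : ∀ x ∈ Ω, ∀ y ∈ Ω, ‖f x - f y‖ ≤ K * ‖x - y‖)
    (E : Set (EuclideanSpace ℝ (Fin n))) (hE : E = {x ∈ Ω | f x = 0})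
    (δ : ℝ) (hδ : δ = (volume (Ω \ E)).toReal)
    (hδc₀ : volume (Ω \ E) < ENNReal.ofReal c₀) :
    (∀ x ∈ Ω, ‖f x‖ ≤ K * (δ / c₀) ^ ((1 : ℝ) / n)) ∧
    ∫ x in Ω, ‖f x‖ ^ 2 ∂volume ≤
      K ^ 2 * δ ^ (((n : ℝ) + 2) / n) * c₀ ^ (-(2 : ℝ) / n) := by
  subst hE
  have hsup : ∀ x ∈ Ω, ‖f x‖ ≤ K * (δ / c₀) ^ ((1 : ℝ) / n) := fun x hx =>
    hδ ▸ norm_le_mul_rpow_of_measure_ball_ge (by omega) hc₀ hdens hK hf hδc₀ hx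
  refine ⟨hsup, ?_⟩
  calc ∫ x in Ω, ‖f x‖ ^ 2 ∂volume
      ≤ _ := setIntegral_norm_sq_le_mul_measure hΩo.measurableSet hsup (hδc₀.trans_le le_top)
    _ = _ := by
      rw [measureReal_def, ← hδ]
      exact mul_div_rpow_sq_mul_eq (by omega) K (hδ ▸ ENNReal.toReal_nonneg) hc₀.le

/-- Quantitative estimate for Lipschitz functions vanishing outside a small set (proof of
Lemma 6.1): if `Ω ⊆ ℝⁿ` is open, bounded, with the lower measure density property
`vol(Ω ∩ B(x,ρ)) ≥ c₀ρⁿ`, `f : Ω → ℝ^m` is `K`-Lipschitz, `E = {f = 0}` and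
`δ = vol(Ω ∖ E) < c₀`, then `sup_Ω ‖f‖ ≤ K (δ/c₀)^{1/n}` and
`∫_Ω ‖f‖² ≤ K² δ^{(n+2)/n} c₀^{−2/n}`. -/
theorem stmt11 (n m : ℕ) (hn : 1 ≤ n) (hm : 1 ≤ m)
    (Ω : Set (EuclideanSpace ℝ (Fin n))) (hΩo : IsOpen Ω) (hΩb : Bornology.IsBounded Ω)
    (c₀ : ℝ) (hc₀ : 0 < c₀)
    (hdens : ∀ x ∈ Ω, ∀ ρ : ℝ, 0 < ρ → ρ ≤ 1 →
      ENNReal.ofReal (c₀ * ρ ^ n) ≤ volume (Ω ∩ Metric.ball x ρ))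
    (K : ℝ) (hK : 0 ≤ K)
    (f : EuclideanSpace ℝ (Fin n) → EuclideanSpace ℝ (Fin m))
    (hf : ∀ x ∈ Ω, ∀ y ∈ Ω, ‖f x - f y‖ ≤ K * ‖x - y‖)
    (E : Set (EuclideanSpace ℝ (Fin n))) (hE : E = {x ∈ Ω | f x = 0})
    (δ : ℝ) (hδ : δ = (volume (Ω \ E)).toReal)
    (hδc₀ : volume (Ω \ E) < ENNReal.ofReal c₀) :
    (∀ x ∈ Ω, ‖f x‖ ≤ K * (δ / c₀) ^ ((1 : ℝ) / n)) ∧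
    ∫ x in Ω, ‖f x‖ ^ 2 ∂volume ≤
      K ^ 2 * δ ^ (((n : ℝ) + 2) / n) * c₀ ^ (-(2 : ℝ) / n) :=
  stmt11_general n m hn Ω hΩo c₀ hc₀ hdens K hK f hf E hE δ hδ hδc₀
end
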